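/- arXiv:2304.11558 — 3 statements merged into one kernel-verified Lean document; each statement's English description precedes it below -/
import Mathlib

section
/- For any finite alphabets 𝒳, 𝒴, any probability distribution q_X on 𝒳, any distortion measure d, and any Δ ≥ 0, the rate-distortion function admits the parametric representation R(Δ|q_X) = sup_{ν ≥ 0} [ −νΔ + min over probability distributions p_Y on 𝒴 of ( −Σ_x q_X(x) log Σ_y p_Y(y) e^{−ν d(x,y)} ) ]. -/
open scoped Classical

noncomputable section

/-- `p` is a probability distribution on the finite alphabet `X`. -/
def IsProb {X : Type*} [Fintype X] (p : X → ℝ) : Prop :=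
  (∀ x, 0 ≤ p x) ∧ ∑ x, p x = 1

/-- `W` is a conditional probability distribution (stochastic matrix) from `X` to `Y`. -/
def IsKernel {X Y : Type*} [Fintype X] [Fintype Y] (W : X → Y → ℝ) : Prop :=
  (∀ x y, 0 ≤ W x y) ∧ ∀ x, ∑ y, W x y = 1

/-- Mutual information `I(q, W)`. -/
def mutualInfo {X Y : Type*} [Fintype X] [Fintype Y] (q : X → ℝ) (W : X → Y → ℝ) : ℝ :=
  ∑ x, ∑ y, q x * W x y * Real.log (W x y / ∑ x', q x' * W x' y)

/-- The rate-distortion function `R(Δ|q)`. -/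
def rdFun {X Y : Type*} [Fintype X] [Fintype Y] (d : X → Y → ℝ) (Δ : ℝ) (q : X → ℝ) : ℝ :=
  sInf { r | ∃ W, IsKernel W ∧ (∑ x, ∑ y, q x * W x y * d x y) ≤ Δ ∧ r = mutualInfo q W }

/-- Kullback–Leibler divergence `D(q‖P)`, equal to `⊤` when `q` is not absolutely
continuous with respect to `P`. -/
def klDiv {X : Type*} [Fintype X] (q P : X → ℝ) : EReal :=
  if ∀ x, P x = 0 → q x = 0 then (((∑ x, q x * Real.log (q x / P x)) : ℝ) : EReal) else ⊤

/-- Real-valued Kullback–Leibler divergence (used when `P` has full support, in which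
case `q` is automatically absolutely continuous with respect to `P`). -/
def klDivR {X : Type*} [Fintype X] (q P : X → ℝ) : ℝ :=
  ∑ x, q x * Real.log (q x / P x)

/-- Log-sum inequality. -/
lemma rd_log_sum {ι : Type*} (s : Finset ι) (a b : ι → ℝ)
    (ha : ∀ i ∈ s, 0 ≤ a i) (hb : ∀ i ∈ s, 0 ≤ b i)
    (hab : ∀ i ∈ s, b i = 0 → a i = 0) :
    (∑ i ∈ s, a i) * Real.log ((∑ i ∈ s, a i) / (∑ i ∈ s, b i)) ≤
      ∑ i ∈ s, a i * Real.log (a i / b i) := by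
  set A := ∑ i ∈ s, a i with hA
  set B := ∑ i ∈ s, b i with hB
  rcases eq_or_lt_of_le (Finset.sum_nonneg ha) with hA0 | hApos'
  · -- A = 0 : all a are 0
    have h0 : ∀ i ∈ s, a i = 0 := by
      intro i hi
      exact (Finset.sum_eq_zero_iff_of_nonneg ha).1 hA0.symm i hi
    rw [show A = 0 from hA.trans hA0.symm]
    simp only [zero_mul]
    apply Finset.sum_nonneg
    intro i hi
    rw [h0 i hi]
    simp
  have hApos : 0 < A := hA ▸ hApos'
  rcases eq_or_lt_of_le (Finset.sum_nonneg hb) with hB0 | hBpos'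
  · -- B = 0 : all b are 0, hence all a are 0, contradiction with A > 0
    exfalso
    have h0 : ∀ i ∈ s, b i = 0 := by
      intro i hi
      exact (Finset.sum_eq_zero_iff_of_nonneg hb).1 hB0.symm i hi
    have : A = 0 := hA.trans (Finset.sum_eq_zero fun i hi => hab i hi (h0 i hi))
    linarith
  have hBpos : 0 < B := hB ▸ hBpos'
  -- main case : A > 0, B > 0
  have key : ∀ i ∈ s, a i * Real.log (A / B) + (a i - b i * (A / B)) ≤
      a i * Real.log (a i / b i) := by
    intro i hi
    rcases eq_or_lt_of_le (ha i hi) with ha0 | hapos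
    · rw [← ha0]
      have : 0 ≤ b i * (A / B) := mul_nonneg (hb i hi) (div_nonneg hApos.le hBpos.le)
      simp only [zero_mul, zero_add, zero_sub, zero_mul]
      linarith
    · have hbpos : 0 < b i := by
        rcases eq_or_lt_of_le (hb i hi) with hb0 | h
        · exact absurd (hab i hi hb0.symm) (ne_of_gt hapos)
        · exact h
      -- log (a/b) ≥ log (A/B) + 1 - (b*A)/(a*B)
      have ht : 0 < (b i * A) / (a i * B) := by positivity
      have hlog := Real.log_le_sub_one_of_pos ht
      have hrw : Real.log ((b i * A) / (a i * B)) =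
          Real.log (A / B) - Real.log (a i / b i) := by
        rw [Real.log_div (by positivity) (by positivity),
            Real.log_div (ne_of_gt hApos) (ne_of_gt hBpos),
            Real.log_div (ne_of_gt hapos) (ne_of_gt hbpos),
            Real.log_mul (ne_of_gt hbpos) (ne_of_gt hApos),
            Real.log_mul (ne_of_gt hapos) (ne_of_gt hBpos)]
        ring
      rw [hrw] at hlog
      -- hlog : log (A/B) - log (a/b) ≤ (b*A)/(a*B) - 1
      have h2 : a i * (Real.log (A / B) - Real.log (a i / b i)) ≤
          a i * ((b i * A) / (a i * B) - 1) :=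
        mul_le_mul_of_nonneg_left hlog hapos.le
      have h3 : a i * ((b i * A) / (a i * B) - 1) = b i * (A / B) - a i := by
        field_simp
      rw [h3] at h2
      linarith [mul_sub (a i) (Real.log (A / B)) (Real.log (a i / b i))]
  calc A * Real.log (A / B) = ∑ i ∈ s, (a i * Real.log (A / B) + (a i - b i * (A / B))) := by
        rw [Finset.sum_add_distrib, ← Finset.sum_mul, Finset.sum_sub_distrib, ← Finset.sum_mul]
        rw [← hA, ← hB]
        field_simp
        ring
      _ ≤ ∑ i ∈ s, a i * Real.log (a i / b i) := Finset.sum_le_sum key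

set_option linter.unusedSectionVars false
open Pointwise

section RD

variable {X Y : Type*} [Fintype X] [Fintype Y]

/-- The output marginal distribution. -/
def rdMarg (q : X → ℝ) (W : X → Y → ℝ) (y : Y) : ℝ := ∑ x, q x * W x y

/-- Average distortion. -/
def rdDist (q : X → ℝ) (d : X → Y → ℝ) (W : X → Y → ℝ) : ℝ :=
  ∑ x, ∑ y, q x * W x y * d x y

/-- A globally continuous expression for mutual information. -/
def rdItil (q : X → ℝ) (W : X → Y → ℝ) : ℝ :=
  (∑ x, ∑ y, q x * (W x y * Real.log (W x y))) -
    ∑ y, rdMarg q W y * Real.log (rdMarg q W y)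

/-- Mutual information (defined later in the file as `mutualInfo`). -/
def rdMI (q : X → ℝ) (W : X → Y → ℝ) : ℝ :=
  ∑ x, ∑ y, q x * W x y * Real.log (W x y / ∑ x', q x' * W x' y)

lemma rdMarg_nonneg {q : X → ℝ} (hq : ∀ x, 0 ≤ q x) {W : X → Y → ℝ}
    (hW : ∀ x y, 0 ≤ W x y) (y : Y) : 0 ≤ rdMarg q W y :=
  Finset.sum_nonneg fun x _ => mul_nonneg (hq x) (hW x y)

lemma le_rdMarg {q : X → ℝ} (hq : ∀ x, 0 ≤ q x) {W : X → Y → ℝ}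
    (hW : ∀ x y, 0 ≤ W x y) (x : X) (y : Y) : q x * W x y ≤ rdMarg q W y :=
  Finset.single_le_sum (f := fun x => q x * W x y)
    (fun x _ => mul_nonneg (hq x) (hW x y)) (Finset.mem_univ x)

lemma rdMarg_sum {q : X → ℝ} (hq : ∑ x, q x = 1) {W : X → Y → ℝ}
    (hW : ∀ x, ∑ y, W x y = 1) : ∑ y, rdMarg q W y = 1 := by
  unfold rdMarg
  rw [Finset.sum_comm]
  calc ∑ x, ∑ y, q x * W x y = ∑ x, q x * ∑ y, W x y := by
        simp [Finset.mul_sum]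
    _ = 1 := by simp only [hW, mul_one]; exact hq

/-- On kernels, `rdMI` agrees with the continuous expression `rdItil`. -/
lemma rdMI_eq_rdItil {q : X → ℝ} (hq : ∀ x, 0 ≤ q x) {W : X → Y → ℝ}
    (hW : ∀ x y, 0 ≤ W x y) : rdMI q W = rdItil q W := by
  unfold rdMI rdItil
  have key : ∀ x y, q x * W x y * Real.log (W x y / rdMarg q W y) =
      q x * (W x y * Real.log (W x y)) - q x * W x y * Real.log (rdMarg q W y) := by
    intro x y
    rcases eq_or_lt_of_le (hq x) with hq0 | hq0
    · rw [← hq0]; ring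
    rcases eq_or_lt_of_le (hW x y) with hw0 | hw0
    · rw [← hw0]; simp
    have hm : 0 < rdMarg q W y :=
      lt_of_lt_of_le (mul_pos hq0 hw0) (le_rdMarg hq hW x y)
    rw [Real.log_div (ne_of_gt hw0) (ne_of_gt hm)]
    ring
  calc ∑ x, ∑ y, q x * W x y * Real.log (W x y / ∑ x', q x' * W x' y)
      = ∑ x, ∑ y, (q x * (W x y * Real.log (W x y)) -
          q x * W x y * Real.log (rdMarg q W y)) := by
        refine Finset.sum_congr rfl fun x _ => Finset.sum_congr rfl fun y _ => key x y
    _ = (∑ x, ∑ y, q x * (W x y * Real.log (W x y))) -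
          ∑ x, ∑ y, q x * W x y * Real.log (rdMarg q W y) := by
        rw [← Finset.sum_sub_distrib]
        refine Finset.sum_congr rfl fun x _ => ?_
        rw [← Finset.sum_sub_distrib]
    _ = (∑ x, ∑ y, q x * (W x y * Real.log (W x y))) -
          ∑ y, rdMarg q W y * Real.log (rdMarg q W y) := by
        congr 1
        rw [Finset.sum_comm]
        refine Finset.sum_congr rfl fun y _ => ?_
        rw [← Finset.sum_mul]
        rfl

lemma continuous_rdItil (q : X → ℝ) : Continuous fun W : X → Y → ℝ => rdItil q W := by
  unfold rdItil rdMarg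
  apply Continuous.sub
  · refine continuous_finset_sum _ fun x _ => continuous_finset_sum _ fun y _ => ?_
    have hA : Continuous fun W : X → Y → ℝ => W x y :=
      (continuous_apply y).comp (continuous_apply x)
    exact continuous_const.mul (Real.continuous_mul_log.comp hA)
  · refine continuous_finset_sum _ fun y _ => ?_
    have hm : Continuous fun W : X → Y → ℝ => ∑ x, q x * W x y :=
      continuous_finset_sum _ fun x _ =>
        continuous_const.mul ((continuous_apply y).comp (continuous_apply x))
    exact Real.continuous_mul_log.comp hm

lemma continuous_rdDist (q : X → ℝ) (d : X → Y → ℝ) :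
    Continuous fun W : X → Y → ℝ => rdDist q d W := by
  unfold rdDist
  refine continuous_finset_sum _ fun x _ => continuous_finset_sum _ fun y _ => ?_
  have hA : Continuous fun W : X → Y → ℝ => W x y :=
    (continuous_apply y).comp (continuous_apply x)
  exact (continuous_const.mul hA).mul continuous_const

lemma isCompact_kernels :
    IsCompact {W : X → Y → ℝ | (∀ x y, 0 ≤ W x y) ∧ ∀ x, ∑ y, W x y = 1} := by
  refine IsCompact.of_isClosed_subset
    (isCompact_univ_pi fun _ : X => isCompact_univ_pi fun _ : Y => isCompact_Icc
      (a := (0:ℝ)) (b := 1)) ?_ ?_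
  · have h1 : IsClosed {W : X → Y → ℝ | ∀ x y, 0 ≤ W x y} := by
      have : {W : X → Y → ℝ | ∀ x y, 0 ≤ W x y} =
          ⋂ x, ⋂ y, {W : X → Y → ℝ | 0 ≤ W x y} := by
        ext W; simp [Set.mem_iInter]
      rw [this]
      exact isClosed_iInter fun x => isClosed_iInter fun y =>
        isClosed_le continuous_const ((continuous_apply y).comp (continuous_apply x))
    have h2 : IsClosed {W : X → Y → ℝ | ∀ x, ∑ y, W x y = 1} := by
      have : {W : X → Y → ℝ | ∀ x, ∑ y, W x y = 1} =
          ⋂ x, {W : X → Y → ℝ | ∑ y, W x y = 1} := by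
        ext W; simp [Set.mem_iInter]
      rw [this]
      exact isClosed_iInter fun x => isClosed_eq
        (continuous_finset_sum _ fun y _ => (continuous_apply y).comp (continuous_apply x))
        continuous_const
    exact h1.inter h2
  · intro W hW
    simp only [Set.mem_pi, Set.mem_univ, true_implies, Set.mem_Icc]
    intro x y
    refine ⟨hW.1 x y, ?_⟩
    calc W x y ≤ ∑ y', W x y' :=
          Finset.single_le_sum (fun y' _ => hW.1 x y') (Finset.mem_univ y)
      _ = 1 := hW.2 x


lemma rdMI_nonneg {q : X → ℝ} (hq : ∀ x, 0 ≤ q x) {W : X → Y → ℝ}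
    (hW1 : ∀ x y, 0 ≤ W x y) (hW2 : ∀ x, ∑ y, W x y = 1)
    (hm : ∑ y, rdMarg q W y = 1) : 0 ≤ rdMI q W := by
  unfold rdMI
  apply Finset.sum_nonneg
  intro x _
  rcases eq_or_lt_of_le (hq x) with hq0 | hq0
  · apply Finset.sum_nonneg
    intro y _
    rw [← hq0]
    simp
  have key := rd_log_sum Finset.univ (fun y => W x y) (fun y => rdMarg q W y)
    (fun y _ => hW1 x y) (fun y _ => rdMarg_nonneg hq hW1 y)
    (fun y _ hy => by
      have := le_rdMarg hq hW1 x y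
      rw [hy] at this
      nlinarith [hW1 x y])
  rw [hW2 x, hm] at key
  simp only [div_one, Real.log_one, one_mul] at key
  have heq : ∑ y, q x * W x y * Real.log (W x y / ∑ x', q x' * W x' y) =
      q x * ∑ y, W x y * Real.log (W x y / rdMarg q W y) := by
    rw [Finset.mul_sum]
    refine Finset.sum_congr rfl fun y _ => ?_
    have h : rdMarg q W y = ∑ x', q x' * W x' y := rfl
    rw [← h]
    ring
  rw [heq]
  exact mul_nonneg hq0.le key

/-- Two-point log-sum inequality in the form needed for convexity of mutual information. -/
lemma rd_mix_term (t c w1 w2 m1 m2 : ℝ) (ht0 : 0 ≤ t) (ht1 : t ≤ 1) (hc : 0 ≤ c)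
    (hw1 : 0 ≤ w1) (hw2 : 0 ≤ w2) (hm1 : c * w1 ≤ m1) (hm2 : c * w2 ≤ m2) :
    c * (t * w1 + (1 - t) * w2) *
        Real.log ((t * w1 + (1 - t) * w2) / (t * m1 + (1 - t) * m2)) ≤
      t * (c * w1 * Real.log (w1 / m1)) + (1 - t) * (c * w2 * Real.log (w2 / m2)) := by
  rcases eq_or_lt_of_le hc with hc0 | hc0
  · rw [← hc0]; simp
  have key := rd_log_sum Finset.univ
    (fun i : Bool => cond i (t * (c * w1)) ((1 - t) * (c * w2)))
    (fun i : Bool => cond i (t * (c * m1)) ((1 - t) * (c * m2)))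
    (by
      rintro (_|_) _
      · exact mul_nonneg (by linarith) (mul_nonneg hc0.le hw2)
      · exact mul_nonneg ht0 (mul_nonneg hc0.le hw1))
    (by
      rintro (_|_) _
      · exact mul_nonneg (by linarith)
          (mul_nonneg hc0.le (le_trans (mul_nonneg hc0.le hw2) hm2))
      · exact mul_nonneg ht0
          (mul_nonneg hc0.le (le_trans (mul_nonneg hc0.le hw1) hm1)))
    (by
      rintro (_|_) _ h
      · simp only [Bool.cond_false] at h ⊢
        rcases mul_eq_zero.1 h with h1 | h1
        · rw [h1, zero_mul]
        · rcases mul_eq_zero.1 h1 with h2 | h2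
          · rw [h2, zero_mul, mul_zero]
          · have hcw : c * w2 = 0 :=
              le_antisymm (h2 ▸ hm2) (mul_nonneg hc0.le hw2)
            rw [hcw, mul_zero]
      · simp only [Bool.cond_true] at h ⊢
        rcases mul_eq_zero.1 h with h1 | h1
        · rw [h1, zero_mul]
        · rcases mul_eq_zero.1 h1 with h2 | h2
          · rw [h2, zero_mul, mul_zero]
          · have hcw : c * w1 = 0 :=
              le_antisymm (h2 ▸ hm1) (mul_nonneg hc0.le hw1)
            rw [hcw, mul_zero])
  rw [Fintype.sum_bool, Fintype.sum_bool, Fintype.sum_bool] at key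
  simp only [Bool.cond_true, Bool.cond_false] at key
  have e1 : t * (c * w1) + (1 - t) * (c * w2) = c * (t * w1 + (1 - t) * w2) := by ring
  have e2 : t * (c * m1) + (1 - t) * (c * m2) = c * (t * m1 + (1 - t) * m2) := by ring
  rw [e1, e2, mul_div_mul_left _ _ (ne_of_gt hc0)] at key
  have e3 : t * (c * w1) * Real.log (t * (c * w1) / (t * (c * m1))) =
      t * (c * w1 * Real.log (w1 / m1)) := by
    rcases eq_or_lt_of_le ht0 with h0 | h0
    · rw [← h0]; ring
    rw [mul_div_mul_left _ _ (ne_of_gt h0), mul_div_mul_left _ _ (ne_of_gt hc0)]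
    ring
  have e4 : (1 - t) * (c * w2) * Real.log ((1 - t) * (c * w2) / ((1 - t) * (c * m2))) =
      (1 - t) * (c * w2 * Real.log (w2 / m2)) := by
    rcases eq_or_lt_of_le (by linarith : (0:ℝ) ≤ 1 - t) with h0 | h0
    · rw [← h0]; ring
    rw [mul_div_mul_left _ _ (ne_of_gt h0), mul_div_mul_left _ _ (ne_of_gt hc0)]
    ring
  rw [e3, e4] at key
  linarith

/-- Convexity of mutual information in the kernel. -/
lemma rdMI_convex {q : X → ℝ} (hq : ∀ x, 0 ≤ q x) {W1 W2 : X → Y → ℝ}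
    (h11 : ∀ x y, 0 ≤ W1 x y) (h21 : ∀ x y, 0 ≤ W2 x y)
    {t : ℝ} (ht0 : 0 ≤ t) (ht1 : t ≤ 1) :
    rdMI q (fun x y => t * W1 x y + (1 - t) * W2 x y) ≤
      t * rdMI q W1 + (1 - t) * rdMI q W2 := by
  unfold rdMI
  rw [Finset.mul_sum, Finset.mul_sum, ← Finset.sum_add_distrib]
  refine Finset.sum_le_sum fun x _ => ?_
  rw [Finset.mul_sum, Finset.mul_sum, ← Finset.sum_add_distrib]
  refine Finset.sum_le_sum fun y _ => ?_
  beta_reduce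
  have hmarg : (∑ x'', q x'' * (t * W1 x'' y + (1 - t) * W2 x'' y)) =
      t * (∑ x'', q x'' * W1 x'' y) + (1 - t) * (∑ x'', q x'' * W2 x'' y) := by
    rw [Finset.mul_sum, Finset.mul_sum, ← Finset.sum_add_distrib]
    refine Finset.sum_congr rfl fun x'' _ => by ring
  rw [hmarg]
  have key := rd_mix_term t (q x) (W1 x y) (W2 x y)
    (∑ x', q x' * W1 x' y) (∑ x', q x' * W2 x' y) ht0 ht1 (hq x)
    (h11 x y) (h21 x y) (le_rdMarg hq h11 x y) (le_rdMarg hq h21 x y)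
  calc q x * (t * W1 x y + (1 - t) * W2 x y) *
        Real.log ((t * W1 x y + (1 - t) * W2 x y) /
          (t * (∑ x', q x' * W1 x' y) + (1 - t) * (∑ x', q x' * W2 x' y))) ≤
      t * (q x * W1 x y * Real.log (W1 x y / ∑ x', q x' * W1 x' y)) +
        (1 - t) * (q x * W2 x y * Real.log (W2 x y / ∑ x', q x' * W2 x' y)) := by
        have e1 : q x * W1 x y * Real.log (W1 x y / ∑ x', q x' * W1 x' y) =
            q x * (W1 x y * Real.log (W1 x y / ∑ x', q x' * W1 x' y)) := by ring
        exact le_trans (le_of_eq (by ring)) (le_trans key (le_of_eq (by ring)))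
    _ = _ := by ring

/-- Mutual information plus scaled distortion as a single double sum. -/
lemma rdMI_add_dist (q : X → ℝ) (d : X → Y → ℝ) (W : X → Y → ℝ) (ν : ℝ) :
    rdMI q W + ν * rdDist q d W =
      ∑ x, ∑ y, (q x * W x y * Real.log (W x y / rdMarg q W y) +
        ν * (q x * W x y * d x y)) := by
  unfold rdMI rdDist
  rw [Finset.mul_sum, ← Finset.sum_add_distrib]
  refine Finset.sum_congr rfl fun x _ => ?_
  rw [Finset.mul_sum, ← Finset.sum_add_distrib]
  exact Finset.sum_congr rfl fun y _ => rfl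

/-- Weak duality inequality, with the output marginal as reference distribution. -/
lemma rd_weak {q : X → ℝ} (hq1 : ∀ x, 0 ≤ q x) {d : X → Y → ℝ}
    {W : X → Y → ℝ} (hW1 : ∀ x y, 0 ≤ W x y) (hW2 : ∀ x, ∑ y, W x y = 1)
    {ν : ℝ} :
    -∑ x, q x * Real.log (∑ y, rdMarg q W y * Real.exp (-(ν * d x y))) ≤
      rdMI q W + ν * rdDist q d W := by
  rw [rdMI_add_dist, ← Finset.sum_neg_distrib]
  refine Finset.sum_le_sum fun x _ => ?_
  rcases eq_or_lt_of_le (hq1 x) with hq0 | hq0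
  · rw [← hq0]
    simp only [zero_mul, neg_zero]
    refine Finset.sum_nonneg fun y _ => ?_
    simp
  have key := rd_log_sum Finset.univ (fun y => W x y)
    (fun y => rdMarg q W y * Real.exp (-(ν * d x y)))
    (fun y _ => hW1 x y)
    (fun y _ => mul_nonneg (rdMarg_nonneg hq1 hW1 y) (Real.exp_pos _).le)
    (fun y _ hy => by
      have hm0 : rdMarg q W y = 0 := by
        rcases mul_eq_zero.1 hy with h | h
        · exact h
        · exact absurd h (ne_of_gt (Real.exp_pos _))
      have := le_rdMarg hq1 hW1 x y
      rw [hm0] at this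
      nlinarith [hW1 x y])
  rw [hW2 x] at key
  have hterm : ∀ y, W x y * Real.log (W x y /
      (rdMarg q W y * Real.exp (-(ν * d x y)))) =
      W x y * Real.log (W x y / rdMarg q W y) + ν * (W x y * d x y) := by
    intro y
    rcases eq_or_lt_of_le (hW1 x y) with hw0 | hw0
    · rw [← hw0]; ring
    have hm : 0 < rdMarg q W y :=
      lt_of_lt_of_le (mul_pos hq0 hw0) (le_rdMarg hq1 hW1 x y)
    rw [Real.log_div (ne_of_gt hw0) (by positivity),
        Real.log_div (ne_of_gt hw0) (ne_of_gt hm),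
        Real.log_mul (ne_of_gt hm) (ne_of_gt (Real.exp_pos _)), Real.log_exp]
    ring
  calc -(q x * Real.log (∑ y, rdMarg q W y * Real.exp (-(ν * d x y))))
      = q x * (1 * Real.log (1 / ∑ y, rdMarg q W y * Real.exp (-(ν * d x y)))) := by
        rw [one_mul, one_div, Real.log_inv]
        ring
    _ ≤ q x * ∑ y, W x y * Real.log (W x y /
          (rdMarg q W y * Real.exp (-(ν * d x y)))) :=
        mul_le_mul_of_nonneg_left key hq0.le
    _ = ∑ y, (q x * W x y * Real.log (W x y / rdMarg q W y) +
          ν * (q x * W x y * d x y)) := by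
        rw [Finset.mul_sum]
        refine Finset.sum_congr rfl fun y _ => ?_
        rw [hterm y]
        ring

/-- The tilted kernel associated to an output distribution `p` witnesses that the
dual functional is an upper bound for `inf (I + ν D)`. -/
lemma rd_tilt {q : X → ℝ} (hq1 : ∀ x, 0 ≤ q x) (hq2 : ∑ x, q x = 1)
    (d : X → Y → ℝ) (ν : ℝ) {p : Y → ℝ} (hp1 : ∀ y, 0 ≤ p y) (hp2 : ∑ y, p y = 1) :
    ∃ W : X → Y → ℝ, (∀ x y, 0 ≤ W x y) ∧ (∀ x, ∑ y, W x y = 1) ∧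
      rdMI q W + ν * rdDist q d W ≤
        -∑ x, q x * Real.log (∑ y, p y * Real.exp (-(ν * d x y))) := by
  have hpy : ∃ y, 0 < p y := by
    by_contra h
    push_neg at h
    have : ∀ y ∈ Finset.univ, p y = 0 := fun y _ => le_antisymm (h y) (hp1 y)
    rw [Finset.sum_eq_zero this] at hp2
    norm_num at hp2
  obtain ⟨y0, hy0⟩ := hpy
  set Z : X → ℝ := fun x => ∑ y, p y * Real.exp (-(ν * d x y)) with hZdef
  have hZ : ∀ x, 0 < Z x := fun x =>
    Finset.sum_pos' (fun y _ => mul_nonneg (hp1 y) (Real.exp_pos _).le)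
      ⟨y0, Finset.mem_univ y0, mul_pos hy0 (Real.exp_pos _)⟩
  set W : X → Y → ℝ := fun x y => p y * Real.exp (-(ν * d x y)) / Z x with hWdef
  have hW1 : ∀ x y, 0 ≤ W x y := fun x y =>
    div_nonneg (mul_nonneg (hp1 y) (Real.exp_pos _).le) (hZ x).le
  have hW2 : ∀ x, ∑ y, W x y = 1 := fun x => by
    show (∑ y, p y * Real.exp (-(ν * d x y)) / Z x) = 1
    rw [← Finset.sum_div]
    exact div_self (ne_of_gt (hZ x))
  refine ⟨W, hW1, hW2, ?_⟩
  have hpm : ∀ y, p y = 0 → rdMarg q W y = 0 := by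
    intro y hpy0
    refine Finset.sum_eq_zero fun x _ => ?_
    show q x * (p y * Real.exp (-(ν * d x y)) / Z x) = 0
    rw [hpy0]
    simp
  have hmsum : ∑ y, rdMarg q W y = 1 := rdMarg_sum hq2 hW2
  have hterm : ∀ x y, q x * W x y * Real.log (W x y / rdMarg q W y) +
      ν * (q x * W x y * d x y) =
      q x * W x y * (Real.log (p y) - Real.log (rdMarg q W y)) -
        q x * W x y * Real.log (Z x) := by
    intro x y
    rcases eq_or_lt_of_le (hq1 x) with hq0 | hq0
    · rw [← hq0]; ring
    rcases eq_or_lt_of_le (hp1 y) with hp0 | hp0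
    · have hw0 : W x y = 0 := by
        show p y * Real.exp (-(ν * d x y)) / Z x = 0
        rw [← hp0]
        simp
      rw [hw0]; ring
    have hw0 : 0 < W x y :=
      div_pos (mul_pos hp0 (Real.exp_pos _)) (hZ x)
    have hm : 0 < rdMarg q W y :=
      lt_of_lt_of_le (mul_pos hq0 hw0) (le_rdMarg hq1 hW1 x y)
    have hlogW : Real.log (W x y) = Real.log (p y) - ν * d x y - Real.log (Z x) := by
      show Real.log (p y * Real.exp (-(ν * d x y)) / Z x) = _
      rw [Real.log_div (by positivity) (ne_of_gt (hZ x)),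
          Real.log_mul (ne_of_gt hp0) (ne_of_gt (Real.exp_pos _)), Real.log_exp]
      ring
    rw [Real.log_div (ne_of_gt hw0) (ne_of_gt hm), hlogW]
    ring
  rw [rdMI_add_dist]
  calc ∑ x, ∑ y, (q x * W x y * Real.log (W x y / rdMarg q W y) +
        ν * (q x * W x y * d x y))
      = ∑ x, ∑ y, (q x * W x y * (Real.log (p y) - Real.log (rdMarg q W y)) -
          q x * W x y * Real.log (Z x)) := by
        exact Finset.sum_congr rfl fun x _ => Finset.sum_congr rfl fun y _ => hterm x y
    _ = (∑ y, rdMarg q W y * (Real.log (p y) - Real.log (rdMarg q W y))) -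
          ∑ x, q x * Real.log (Z x) := by
        have e1 : ∑ x, ∑ y, (q x * W x y * (Real.log (p y) - Real.log (rdMarg q W y)) -
            q x * W x y * Real.log (Z x)) =
            (∑ x, ∑ y, q x * W x y * (Real.log (p y) - Real.log (rdMarg q W y))) -
              ∑ x, ∑ y, q x * W x y * Real.log (Z x) := by
          rw [← Finset.sum_sub_distrib]
          exact Finset.sum_congr rfl fun x _ => by rw [← Finset.sum_sub_distrib]
        have e2 : ∑ x, ∑ y, q x * W x y * (Real.log (p y) - Real.log (rdMarg q W y)) =
            ∑ y, rdMarg q W y * (Real.log (p y) - Real.log (rdMarg q W y)) := by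
          rw [Finset.sum_comm]
          refine Finset.sum_congr rfl fun y _ => ?_
          rw [← Finset.sum_mul]
          rfl
        have e3 : ∑ x, ∑ y, q x * W x y * Real.log (Z x) =
            ∑ x, q x * Real.log (Z x) := by
          refine Finset.sum_congr rfl fun x _ => ?_
          calc ∑ y, q x * W x y * Real.log (Z x)
              = ∑ y, (q x * Real.log (Z x)) * W x y :=
                Finset.sum_congr rfl fun y _ => by ring
            _ = (q x * Real.log (Z x)) * ∑ y, W x y := by rw [← Finset.mul_sum]
            _ = q x * Real.log (Z x) := by rw [hW2 x, mul_one]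
        rw [e1, e2, e3]
    _ ≤ 0 - ∑ x, q x * Real.log (Z x) := by
        have hy : ∀ y ∈ Finset.univ, rdMarg q W y *
            (Real.log (p y) - Real.log (rdMarg q W y)) ≤ p y - rdMarg q W y := by
          intro y _
          rcases eq_or_lt_of_le (rdMarg_nonneg hq1 hW1 y) with hm0 | hm0
          · rw [← hm0]; simpa using hp1 y
          have hp0 : 0 < p y := by
            rcases eq_or_lt_of_le (hp1 y) with h | h
            · exact absurd (hpm y h.symm) (ne_of_gt hm0)
            · exact h
          have := Real.log_le_sub_one_of_pos (div_pos hp0 hm0)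
          rw [Real.log_div (ne_of_gt hp0) (ne_of_gt hm0)] at this
          have h2 := mul_le_mul_of_nonneg_left this hm0.le
          calc rdMarg q W y * (Real.log (p y) - Real.log (rdMarg q W y)) ≤
              rdMarg q W y * (p y / rdMarg q W y - 1) := h2
            _ = p y - rdMarg q W y := by field_simp
        have hsum := Finset.sum_le_sum hy
        rw [Finset.sum_sub_distrib, hp2, hmsum] at hsum
        simp only [sub_self] at hsum
        gcongr
    _ = -∑ x, q x * Real.log (Z x) := by ring

lemma rdDist_affine (q : X → ℝ) (d : X → Y → ℝ) (W1 W2 : X → Y → ℝ) (t s : ℝ) :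
    rdDist q d (fun x y => t * W1 x y + s * W2 x y) =
      t * rdDist q d W1 + s * rdDist q d W2 := by
  unfold rdDist
  rw [Finset.mul_sum, Finset.mul_sum, ← Finset.sum_add_distrib]
  refine Finset.sum_congr rfl fun x _ => ?_
  rw [Finset.mul_sum, Finset.mul_sum, ← Finset.sum_add_distrib]
  exact Finset.sum_congr rfl fun y _ => by ring

/-- Strong duality via a separating hyperplane. -/
lemma rd_sep {q : X → ℝ} (hq1 : ∀ x, 0 ≤ q x) (hq2 : ∑ x, q x = 1)
    (d : X → Y → ℝ) (Δ R ε : ℝ) (hε : 0 < ε)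
    (hfeas : ∃ W : X → Y → ℝ, (∀ x y, 0 ≤ W x y) ∧ (∀ x, ∑ y, W x y = 1) ∧
      rdDist q d W ≤ Δ)
    (hR : ∀ W : X → Y → ℝ, (∀ x y, 0 ≤ W x y) → (∀ x, ∑ y, W x y = 1) →
      rdDist q d W ≤ Δ → R ≤ rdMI q W) :
    ∃ ν : ℝ, 0 ≤ ν ∧ ∀ W : X → Y → ℝ, (∀ x y, 0 ≤ W x y) → (∀ x, ∑ y, W x y = 1) →
      R - ε ≤ rdMI q W + ν * (rdDist q d W - Δ) := by
  classical
  set K := {W : X → Y → ℝ | (∀ x y, 0 ≤ W x y) ∧ ∀ x, ∑ y, W x y = 1} with hK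
  set g : (X → Y → ℝ) → ℝ × ℝ := fun W => (rdDist q d W - Δ, rdItil q W) with hg
  have hgc : Continuous g :=
    Continuous.prodMk ((continuous_rdDist q d).sub continuous_const) (continuous_rdItil q)
  have hMI_eq : ∀ W, W ∈ K → rdMI q W = rdItil q W := fun W hW => rdMI_eq_rdItil hq1 hW.1
  set A : Set (ℝ × ℝ) :=
    {z | ∃ W, W ∈ K ∧ rdDist q d W - Δ ≤ z.1 ∧ rdMI q W ≤ z.2} with hA
  have hAeq : A = g '' K + Set.Ici (0:ℝ) ×ˢ Set.Ici (0:ℝ) := by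
    ext z
    constructor
    · rintro ⟨W, hW, h1, h2⟩
      rw [Set.mem_add]
      refine ⟨g W, Set.mem_image_of_mem _ hW,
        (z.1 - (rdDist q d W - Δ), z.2 - rdItil q W), ?_, ?_⟩
      · rw [Set.mem_prod]
        constructor
        · exact Set.mem_Ici.2 (sub_nonneg.2 h1)
        · exact Set.mem_Ici.2 (sub_nonneg.2 (by rw [← hMI_eq W hW]; exact h2))
      · rw [hg]
        ext <;> simp
    · intro hz
      rw [Set.mem_add] at hz
      obtain ⟨w, ⟨W, hW, rfl⟩, c, hc, rfl⟩ := hz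
      rw [Set.mem_prod, Set.mem_Ici, Set.mem_Ici] at hc
      refine ⟨W, hW, ?_, ?_⟩
      · show rdDist q d W - Δ ≤ (g W).1 + c.1
        rw [hg]
        simp only
        linarith [hc.1]
      · show rdMI q W ≤ (g W).2 + c.2
        rw [hg]
        simp only
        rw [hMI_eq W hW]
        linarith [hc.2]
  have hAconv : Convex ℝ A := by
    rintro z1 ⟨W1, hW1, h11, h12⟩ z2 ⟨W2, hW2, h21, h22⟩ t s ht hs hts
    have hs' : s = 1 - t := by linarith
    subst hs'
    refine ⟨fun x y => t * W1 x y + (1 - t) * W2 x y, ⟨?_, ?_⟩, ?_, ?_⟩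
    · intro x y
      show 0 ≤ t * W1 x y + (1 - t) * W2 x y
      have := hW1.1 x y
      have := hW2.1 x y
      nlinarith
    · intro x
      rw [Finset.sum_add_distrib, ← Finset.mul_sum, ← Finset.mul_sum, hW1.2 x, hW2.2 x]
      ring
    · show rdDist q d _ - Δ ≤ (t • z1 + (1 - t) • z2).1
      rw [rdDist_affine]
      have : (t • z1 + (1 - t) • z2).1 = t * z1.1 + (1 - t) * z2.1 := rfl
      rw [this]
      nlinarith
    · show rdMI q _ ≤ (t • z1 + (1 - t) • z2).2
      have : (t • z1 + (1 - t) • z2).2 = t * z1.2 + (1 - t) * z2.2 := rfl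
      rw [this]
      have hconv := rdMI_convex hq1 hW1.1 hW2.1 ht (by linarith)
      calc rdMI q (fun x y => t * W1 x y + (1 - t) * W2 x y) ≤
          t * rdMI q W1 + (1 - t) * rdMI q W2 := hconv
        _ ≤ t * z1.2 + (1 - t) * z2.2 := by nlinarith
  have hAclosed : IsClosed A := by
    rw [hAeq]
    exact IsClosed.add_left_of_isCompact (isClosed_Ici.prod isClosed_Ici)
      (isCompact_kernels.image hgc)
  have hx0 : ((0:ℝ), R - ε) ∉ A := by
    rintro ⟨W, hW, h1, h2⟩
    have := hR W hW.1 hW.2 (by simpa using h1)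
    simp only at h2
    linarith
  obtain ⟨f, u, hfA, hfx⟩ := geometric_hahn_banach_closed_point hAconv hAclosed hx0
  set α := f ((1:ℝ), (0:ℝ)) with hα
  set β := f ((0:ℝ), (1:ℝ)) with hβ
  have hf : ∀ a b : ℝ, f (a, b) = a * α + b * β := by
    intro a b
    have hab : ((a, b) : ℝ × ℝ) = a • ((1:ℝ), (0:ℝ)) + b • ((0:ℝ), (1:ℝ)) := by
      ext <;> simp
    rw [hab, map_add, map_smul, map_smul, smul_eq_mul, smul_eq_mul]
  obtain ⟨W0, h01, h02, h03⟩ := hfeas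
  have hK0 : W0 ∈ K := ⟨h01, h02⟩
  have hmemA : ∀ s t : ℝ, 0 ≤ s → 0 ≤ t → ∀ W, W ∈ K →
      ((rdDist q d W - Δ + s, rdMI q W + t) : ℝ × ℝ) ∈ A :=
    fun s t hs ht W hW => ⟨W, hW, by simp only; linarith, by simp only; linarith⟩
  have hβ0 : β ≤ 0 := by
    by_contra hcon
    push_neg at hcon
    set base := (rdDist q d W0 - Δ) * α + rdMI q W0 * β with hbase
    set t := max 0 ((u - base) / β + 1) with htdef
    have ht0 : 0 ≤ t := le_max_left _ _
    have h := hfA _ (hmemA 0 t le_rfl ht0 W0 hK0)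
    rw [add_zero, hf] at h
    have ht1 : (u - base) / β + 1 ≤ t := le_max_right _ _
    have ht2 : ((u - base) / β + 1) * β ≤ t * β := mul_le_mul_of_nonneg_right ht1 hcon.le
    have ht3 : ((u - base) / β + 1) * β = u - base + β := by field_simp
    nlinarith
  have hα0 : α ≤ 0 := by
    by_contra hcon
    push_neg at hcon
    set base := (rdDist q d W0 - Δ) * α + rdMI q W0 * β with hbase
    set s := max 0 ((u - base) / α + 1) with hsdef
    have hs0 : 0 ≤ s := le_max_left _ _
    have h := hfA _ (hmemA s 0 hs0 le_rfl W0 hK0)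
    rw [add_zero, hf] at h
    have hs1 : (u - base) / α + 1 ≤ s := le_max_right _ _
    have hs2 : ((u - base) / α + 1) * α ≤ s * α := mul_le_mul_of_nonneg_right hs1 hcon.le
    have hs3 : ((u - base) / α + 1) * α = u - base + α := by field_simp
    nlinarith
  have hβlt : β < 0 := by
    rcases eq_or_lt_of_le hβ0 with hb | hb
    · exfalso
      have h := hfA _ (hmemA (Δ - rdDist q d W0) 0 (by linarith) le_rfl W0 hK0)
      rw [add_zero, hf] at h
      have h1 : rdDist q d W0 - Δ + (Δ - rdDist q d W0) = 0 := by ring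
      rw [h1] at h
      have h2 : f ((0:ℝ), R - ε) = (R - ε) * β := by rw [hf]; ring
      rw [h2, hb] at hfx
      rw [hb] at h
      simp at h hfx
      linarith
    · exact hb
  refine ⟨α / β, by rw [div_nonneg_iff]; right; exact ⟨hα0, hβlt.le⟩, ?_⟩
  intro W hW1 hW2
  have h := hfA _ (hmemA 0 0 le_rfl le_rfl W ⟨hW1, hW2⟩)
  rw [add_zero, add_zero, hf] at h
  have h2 : f ((0:ℝ), R - ε) = (R - ε) * β := by rw [hf]; ring
  rw [h2] at hfx
  have hlt : (rdDist q d W - Δ) * α + rdMI q W * β < (R - ε) * β := lt_trans h hfx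
  have hgoal : rdMI q W + α / β * (rdDist q d W - Δ) =
      rdMI q W + α * (rdDist q d W - Δ) / β := by ring
  rw [hgoal, ← sub_le_iff_le_add', le_div_iff_of_neg hβlt]
  nlinarith

/-- Positivity of the partition sum. -/
lemma rd_Zpos {p : Y → ℝ} (hp1 : ∀ y, 0 ≤ p y) (hp2 : ∑ y, p y = 1) (c : Y → ℝ) :
    0 < ∑ y, p y * Real.exp (c y) := by
  have hpy : ∃ y, 0 < p y := by
    by_contra h
    push_neg at h
    have : ∀ y ∈ Finset.univ, p y = 0 := fun y _ => le_antisymm (h y) (hp1 y)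
    rw [Finset.sum_eq_zero this] at hp2
    norm_num at hp2
  obtain ⟨y0, hy0⟩ := hpy
  exact Finset.sum_pos' (fun y _ => mul_nonneg (hp1 y) (Real.exp_pos _).le)
    ⟨y0, Finset.mem_univ y0, mul_pos hy0 (Real.exp_pos _)⟩

end RD

set_option maxHeartbeats 1000000 in
/-- parametric representation of the rate-distortion function. -/
theorem rdFun_parametric'
    {X Y : Type*} [Fintype X] [Fintype Y]
    (qX : X → ℝ) (hq : IsProb qX)
    (d : X → Y → ℝ) (hd : ∀ x y, 0 ≤ d x y)
    (Δ : ℝ) (hΔ : 0 ≤ Δ) :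
    sInf {r | ∃ W : X → Y → ℝ,
        ((∀ x y, 0 ≤ W x y) ∧ ∀ x, ∑ y, W x y = 1) ∧ rdDist qX d W ≤ Δ ∧ r = rdMI qX W} =
      sSup {v | ∃ ν : ℝ, 0 ≤ ν ∧
        v = -(ν * Δ) + sInf {m | ∃ pY : Y → ℝ, IsProb pY ∧
          m = -∑ x, qX x * Real.log (∑ y, pY y * Real.exp (-(ν * d x y)))}} := by
  classical
  obtain ⟨hq1, hq2⟩ := hq
  set G : ℝ → Set ℝ := fun ν => {m | ∃ pY : Y → ℝ, IsProb pY ∧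
      m = -∑ x, qX x * Real.log (∑ y, pY y * Real.exp (-(ν * d x y)))} with hGdef
  set S1 : Set ℝ := {r | ∃ W : X → Y → ℝ,
      ((∀ x y, 0 ≤ W x y) ∧ ∀ x, ∑ y, W x y = 1) ∧ rdDist qX d W ≤ Δ ∧ r = rdMI qX W}
    with hS1def
  set S2 : Set ℝ := {v | ∃ ν : ℝ, 0 ≤ ν ∧ v = -(ν * Δ) + sInf (G ν)} with hS2def
  by_cases hY : Nonempty Y
  case neg =>
    haveI hYe : IsEmpty Y := not_nonempty_iff.1 hY
    have hX : Nonempty X := by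
      by_contra hX
      haveI : IsEmpty X := not_nonempty_iff.1 hX
      rw [Finset.univ_eq_empty, Finset.sum_empty] at hq2
      norm_num at hq2
    obtain ⟨x0⟩ := hX
    have hS1e : S1 = ∅ := by
      ext r
      simp only [hS1def, Set.mem_setOf_eq, Set.mem_empty_iff_false, iff_false]
      rintro ⟨W, hW, -, -⟩
      have h := hW.2 x0
      rw [Finset.univ_eq_empty, Finset.sum_empty] at h
      norm_num at h
    have hGe : ∀ ν : ℝ, G ν = (∅ : Set ℝ) := by
      intro ν
      ext m
      simp only [hGdef, Set.mem_setOf_eq, Set.mem_empty_iff_false, iff_false]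
      rintro ⟨p, hp, -⟩
      have h := hp.2
      rw [Finset.univ_eq_empty, Finset.sum_empty] at h
      norm_num at h
    have hmem0 : (0:ℝ) ∈ S2 := by
      refine ⟨0, le_rfl, ?_⟩
      rw [hGe 0, Real.sInf_empty]
      norm_num
    have hub : ∀ v ∈ S2, v ≤ 0 := by
      rintro v ⟨ν, hν, rfl⟩
      rw [hGe ν, Real.sInf_empty]
      nlinarith [mul_nonneg hν hΔ]
    rw [hS1e, Real.sInf_empty]
    exact le_antisymm (le_csSup ⟨0, hub⟩ hmem0) (csSup_le ⟨0, hmem0⟩ hub)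
  case pos =>
    haveI hYinst : Nonempty Y := hY
    obtain ⟨y0⟩ := hY
    have hGne : ∀ ν : ℝ, (G ν).Nonempty := by
      intro ν
      refine ⟨_, ⟨fun y => if y = y0 then 1 else 0, ⟨?_, ?_⟩, rfl⟩⟩
      · intro y
        by_cases h : y = y0 <;> simp [h]
      · simp
    have hGlb : ∀ ν : ℝ, 0 ≤ ν → ∀ m ∈ G ν, (0:ℝ) ≤ m := by
      rintro ν hν m ⟨p, hp, rfl⟩
      rw [← Finset.sum_neg_distrib]
      refine Finset.sum_nonneg fun x _ => ?_
      have h1 : ∑ y, p y * Real.exp (-(ν * d x y)) ≤ 1 := by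
        rw [← hp.2]
        refine Finset.sum_le_sum fun y _ => ?_
        have h2 : Real.exp (-(ν * d x y)) ≤ 1 := by
          rw [Real.exp_le_one_iff]
          nlinarith [mul_nonneg hν (hd x y)]
        nlinarith [hp.1 y]
      have h2 : Real.log (∑ y, p y * Real.exp (-(ν * d x y))) ≤ 0 :=
        Real.log_nonpos
          (Finset.sum_nonneg fun y _ => mul_nonneg (hp.1 y) (Real.exp_pos _).le) h1
      nlinarith [hq1 x]
    by_cases hfeas : ∃ W : X → Y → ℝ,
        ((∀ x y, 0 ≤ W x y) ∧ ∀ x, ∑ y, W x y = 1) ∧ rdDist qX d W ≤ Δ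
    case neg =>
      -- infeasible case : both sides are 0 (by Real `sSup`/`sInf` junk-value conventions)
      have hS1e : S1 = ∅ := by
        ext r
        simp only [hS1def, Set.mem_setOf_eq, Set.mem_empty_iff_false, iff_false]
        rintro ⟨W, hK, hD, -⟩
        exact hfeas ⟨W, hK, hD⟩
      have hYne : (Finset.univ : Finset Y).Nonempty := Finset.univ_nonempty
      set dm : X → ℝ := fun x => Finset.univ.inf' hYne (d x) with hdm
      set Δmin : ℝ := ∑ x, qX x * dm x with hΔmin
      have hWstar : ∃ W : X → Y → ℝ,
          ((∀ x y, 0 ≤ W x y) ∧ ∀ x, ∑ y, W x y = 1) ∧ rdDist qX d W = Δmin := by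
        choose ystar hystar using fun x => Finset.exists_mem_eq_inf' hYne (d x)
        refine ⟨fun x y => if y = ystar x then 1 else 0, ⟨?_, ?_⟩, ?_⟩
        · intro x y
          by_cases h : y = ystar x <;> simp [h]
        · intro x
          simp
        · rw [hΔmin]
          unfold rdDist
          refine Finset.sum_congr rfl fun x _ => ?_
          have h1 : ∑ y, qX x * (if y = ystar x then 1 else 0) * d x y
              = qX x * d x (ystar x) := by
            rw [Finset.sum_eq_single (ystar x)]
            · simp
            · intro y _ hy
              simp [hy]
            · intro h
              exact absurd (Finset.mem_univ _) h
          rw [h1, hdm]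
          simp only
          rw [(hystar x).2]
      have hgap : Δ < Δmin := by
        obtain ⟨Wst, hKst, hDst⟩ := hWstar
        by_contra hle
        push_neg at hle
        exact hfeas ⟨Wst, hKst, by linarith⟩
      have hGge : ∀ ν : ℝ, 0 ≤ ν → ∀ m ∈ G ν, ν * Δmin ≤ m := by
        rintro ν hν m ⟨p, hp, rfl⟩
        rw [hΔmin, Finset.mul_sum, ← Finset.sum_neg_distrib]
        refine Finset.sum_le_sum fun x _ => ?_
        have hZpos := rd_Zpos hp.1 hp.2 (fun y => -(ν * d x y))
        have h1 : ∑ y, p y * Real.exp (-(ν * d x y)) ≤ Real.exp (-(ν * dm x)) := by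
          calc ∑ y, p y * Real.exp (-(ν * d x y))
              ≤ ∑ y, p y * Real.exp (-(ν * dm x)) := by
                refine Finset.sum_le_sum fun y _ => ?_
                have hdmy : dm x ≤ d x y := Finset.inf'_le _ (Finset.mem_univ y)
                have h2 : Real.exp (-(ν * d x y)) ≤ Real.exp (-(ν * dm x)) := by
                  apply Real.exp_le_exp.2
                  nlinarith
                nlinarith [hp.1 y]
            _ = Real.exp (-(ν * dm x)) := by rw [← Finset.sum_mul, hp.2, one_mul]
        have h2 : Real.log (∑ y, p y * Real.exp (-(ν * d x y))) ≤ -(ν * dm x) := by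
          calc Real.log (∑ y, p y * Real.exp (-(ν * d x y)))
              ≤ Real.log (Real.exp (-(ν * dm x))) := Real.log_le_log hZpos h1
            _ = -(ν * dm x) := Real.log_exp _
        nlinarith [mul_le_mul_of_nonneg_left h2 (hq1 x)]
      have hnb : ¬ BddAbove S2 := by
        rintro ⟨M, hM⟩
        have hgap' : 0 < Δmin - Δ := by linarith
        set ν := max 0 ((M + 1) / (Δmin - Δ)) with hνdef
        have hν0 : 0 ≤ ν := le_max_left _ _
        have hvmem : -(ν * Δ) + sInf (G ν) ∈ S2 := ⟨ν, hν0, rfl⟩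
        have h1 : M + 1 ≤ ν * (Δmin - Δ) := by
          rcases le_or_gt 0 ((M + 1) / (Δmin - Δ)) with h | h
          · have h2 : (M + 1) / (Δmin - Δ) ≤ ν := le_max_right _ _
            have h3 := mul_le_mul_of_nonneg_right h2 hgap'.le
            rwa [div_mul_cancel₀ _ (ne_of_gt hgap')] at h3
          · have hM1 : M + 1 < 0 := by
              by_contra hh
              push_neg at hh
              exact absurd (div_nonneg hh hgap'.le) (not_le.2 h)
            nlinarith [mul_nonneg hν0 hgap'.le]
        have h2 : ν * Δmin ≤ sInf (G ν) :=
          le_csInf (hGne ν) (fun m hm => hGge ν hν0 m hm)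
        have h3 := hM hvmem
        nlinarith
      rw [hS1e, Real.sInf_empty, csSup_of_not_bddAbove hnb, Real.sSup_empty]
    case pos =>
      -- feasible case
      have hS1ne : S1.Nonempty := by
        obtain ⟨W, hK, hD⟩ := hfeas
        exact ⟨rdMI qX W, W, hK, hD, rfl⟩
      have hS1bdd : BddBelow S1 := by
        refine ⟨0, ?_⟩
        rintro r ⟨W, hK, hD, rfl⟩
        exact rdMI_nonneg hq1 hK.1 hK.2 (rdMarg_sum hq2 hK.2)
      -- weak duality : every element of S2 is a lower bound on S1
      have hweak : ∀ v ∈ S2, ∀ r ∈ S1, v ≤ r := by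
        rintro v ⟨ν, hν, rfl⟩ r ⟨W, hK, hD, rfl⟩
        have hpm : IsProb (rdMarg qX W) :=
          ⟨rdMarg_nonneg hq1 hK.1, rdMarg_sum hq2 hK.2⟩
        have hmem : -∑ x, qX x * Real.log (∑ y, rdMarg qX W y * Real.exp (-(ν * d x y)))
            ∈ G ν := ⟨rdMarg qX W, hpm, rfl⟩
        have h1 : sInf (G ν) ≤
            -∑ x, qX x * Real.log (∑ y, rdMarg qX W y * Real.exp (-(ν * d x y))) :=
          csInf_le ⟨0, fun m hm => hGlb ν hν m hm⟩ hmem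
        have h2 := rd_weak (q := qX) (d := d) hq1 hK.1 hK.2 (ν := ν)
        have h3 : ν * (Δ - rdDist qX d W) ≥ 0 := mul_nonneg hν (by linarith)
        nlinarith
      have hub : ∀ v ∈ S2, v ≤ sInf S1 := fun v hv =>
        le_csInf hS1ne (fun r hr => hweak v hv r hr)
      have hS2ne : S2.Nonempty := ⟨-(0 * Δ) + sInf (G 0), 0, le_rfl, rfl⟩
      have hS2bdd : BddAbove S2 := ⟨sInf S1, fun v hv => hub v hv⟩
      -- strong duality
      have hstrong : ∀ ε : ℝ, 0 < ε → sInf S1 - ε ≤ sSup S2 := by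
        intro ε hε
        have hR : ∀ W : X → Y → ℝ, (∀ x y, 0 ≤ W x y) → (∀ x, ∑ y, W x y = 1) →
            rdDist qX d W ≤ Δ → sInf S1 ≤ rdMI qX W := by
          intro W h1 h2 h3
          exact csInf_le hS1bdd ⟨W, ⟨h1, h2⟩, h3, rfl⟩
        obtain ⟨W0, hK0, hD0⟩ := hfeas
        obtain ⟨ν, hν, hsep⟩ := rd_sep hq1 hq2 d Δ (sInf S1) ε hε
          ⟨W0, hK0.1, hK0.2, hD0⟩ hR
        have hvmem : -(ν * Δ) + sInf (G ν) ∈ S2 := ⟨ν, hν, rfl⟩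
        have hlow : sInf S1 - ε + ν * Δ ≤ sInf (G ν) := by
          refine le_csInf (hGne ν) ?_
          rintro m ⟨p, hp, rfl⟩
          obtain ⟨W, hW1, hW2, hWle⟩ := rd_tilt hq1 hq2 d ν hp.1 hp.2
          have h1 := hsep W hW1 hW2
          nlinarith
        have h2 : sInf S1 - ε ≤ -(ν * Δ) + sInf (G ν) := by linarith
        exact le_trans h2 (le_csSup hS2bdd hvmem)
      have hle : sSup S2 ≤ sInf S1 := csSup_le hS2ne (fun v hv => hub v hv)
      have hge : sInf S1 ≤ sSup S2 := by
        by_contra hcon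
        push_neg at hcon
        have h := hstrong ((sInf S1 - sSup S2) / 2) (by linarith)
        linarith
      exact le_antisymm hge hle

set_option maxHeartbeats 1000000 in
/-- parametric representation of the rate-distortion function:
`R(Δ|q_X) = sup_{ν ≥ 0} [ −νΔ + min_{p_Y} ( −Σ_x q_X(x) log Σ_y p_Y(y) e^{−ν d(x,y)} ) ]`. -/
theorem rdFun_parametric
    {X Y : Type*} [Fintype X] [Fintype Y]
    (qX : X → ℝ) (hq : IsProb qX)
    (d : X → Y → ℝ) (hd : ∀ x y, 0 ≤ d x y)
    (Δ : ℝ) (hΔ : 0 ≤ Δ) :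
    rdFun d Δ qX =
      sSup { v | ∃ ν : ℝ, 0 ≤ ν ∧
        v = -(ν * Δ) + sInf { m | ∃ pY : Y → ℝ, IsProb pY ∧
          m = -∑ x, qX x * Real.log (∑ y, pY y * Real.exp (-(ν * d x y))) } } := by
  have h := rdFun_parametric' qX hq d hd Δ hΔ
  exact h
end
end

section
/- For any finite alphabets 𝒳, 𝒴, any probability distribution P on 𝒳 with full support, any probability distribution p_Y on 𝒴, any distortion measure d, any ν ≥ 0, and any E ≥ 0: G^{(ν)}(E, p_Y|P) = inf_{μ ≥ 0} { μE + G^{(μ,ν)}(p_Y|P) }, where G^{(ν)}(E, p_Y|P) := max over probability distributions q_X on 𝒳 with D(q_X||P) ≤ E of ( −Σ_x q_X(x) log Σ_y p_Y(y) e^{−ν d(x,y)} ) and G^{(μ,ν)}(p_Y|P) := max over probability distributions q_X on 𝒳 of [ −μ D(q_X||P) − Σ_x q_X(x) log Σ_y p_Y(y) e^{−ν d(x,y)} ]. -/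
open scoped Classical

noncomputable section

/-- `A(x) = Σ_y p_Y(y) e^{−ν d(x,y)}`. -/
def Afun {X Y : Type*} [Fintype Y] (d : X → Y → ℝ) (ν : ℝ) (pY : Y → ℝ) (x : X) : ℝ :=
  ∑ y, pY y * Real.exp (-(ν * d x y))

/-- `G^{(ν)}(E, p_Y|P)`: constrained maximization. -/
def Gnu {X Y : Type*} [Fintype X] [Fintype Y] (d : X → Y → ℝ) (ν E : ℝ)
    (pY : Y → ℝ) (P : X → ℝ) : ℝ :=
  sSup { v | ∃ qX : X → ℝ, IsProb qX ∧ klDivR qX P ≤ E ∧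
    v = -∑ x, qX x * Real.log (Afun d ν pY x) }

/-- `G^{(μ,ν)}(p_Y|P)`: unconstrained maximization with Lagrange multiplier `μ`. -/
def Gmunu {X Y : Type*} [Fintype X] [Fintype Y] (d : X → Y → ℝ) (μ ν : ℝ)
    (pY : Y → ℝ) (P : X → ℝ) : ℝ :=
  sSup { v | ∃ qX : X → ℝ, IsProb qX ∧
    v = -(μ * klDivR qX P) - ∑ x, qX x * Real.log (Afun d ν pY x) }


lemma aux_pt {q p : ℝ} (hq : 0 ≤ q) (hp : 0 < p) : q - p ≤ q * Real.log (q / p) := by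
  rcases eq_or_lt_of_le hq with h | h
  · simp [← h]; linarith
  · have hlog := Real.log_le_sub_one_of_pos (div_pos hp h)
    have hlq : Real.log (q / p) = - Real.log (p / q) := by
      rw [← Real.log_inv]; congr 1; field_simp
    have h2 : q * Real.log (p / q) ≤ q * (p / q - 1) := mul_le_mul_of_nonneg_left hlog h.le
    have h3 : q * (p / q - 1) = p - q := by field_simp
    rw [hlq, mul_neg]; linarith

lemma aux_kl_nonneg {X : Type*} [Fintype X] (q p : X → ℝ) (hq0 : ∀ x, 0 ≤ q x)
    (hq1 : ∑ x, q x = 1) (hp0 : ∀ x, 0 < p x) (hp1 : ∑ x, p x = 1) :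
    0 ≤ ∑ x, q x * Real.log (q x / p x) := by
  have h := Finset.sum_le_sum (fun x (_ : x ∈ Finset.univ) => aux_pt (hq0 x) (hp0 x))
  rw [Finset.sum_sub_distrib, hq1, hp1] at h
  linarith

lemma aux_gibbs {X : Type*} [Fintype X] (μ : ℝ) (hμ : 0 < μ) (c P q : X → ℝ)
    (hP0 : ∀ x, 0 < P x)
    (hq0 : ∀ x, 0 ≤ q x) (hq1 : ∑ x, q x = 1) :
    ∑ x, q x * c x - μ * ∑ x, q x * Real.log (q x / P x)
      ≤ μ * Real.log (∑ x, P x * Real.exp (c x / μ)) := by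
  have hne : Nonempty X := by
    by_contra h
    rw [not_nonempty_iff] at h
    simp at hq1
  set Z := ∑ x, P x * Real.exp (c x / μ) with hZ
  have hZpos : 0 < Z := Finset.sum_pos (fun x _ => mul_pos (hP0 x) (Real.exp_pos _)) Finset.univ_nonempty
  set r : X → ℝ := fun x => P x * Real.exp (c x / μ) / Z with hr
  have hr0 : ∀ x, 0 < r x := fun x => div_pos (mul_pos (hP0 x) (Real.exp_pos _)) hZpos
  have hr1 : ∑ x, r x = 1 := by
    rw [hr, ← Finset.sum_div, ← hZ, div_self (ne_of_gt hZpos)]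
  have hkl := aux_kl_nonneg q r hq0 hq1 hr0 hr1
  have hterm : ∀ x ∈ Finset.univ, q x * Real.log (q x / r x)
      = q x * Real.log (q x / P x) - q x * (c x / μ) + q x * Real.log Z := by
    intro x _
    rcases eq_or_lt_of_le (hq0 x) with h | h
    · simp [← h]
    · have hlr : Real.log (r x) = Real.log (P x) + c x / μ - Real.log Z := by
        rw [hr]
        rw [Real.log_div (ne_of_gt (mul_pos (hP0 x) (Real.exp_pos _))) (ne_of_gt hZpos),
          Real.log_mul (ne_of_gt (hP0 x)) (Real.exp_ne_zero _), Real.log_exp]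
      rw [Real.log_div (ne_of_gt h) (ne_of_gt (hr0 x)),
        Real.log_div (ne_of_gt h) (ne_of_gt (hP0 x)), hlr]
      ring
  have hident : ∑ x, q x * Real.log (q x / r x)
      = ∑ x, q x * Real.log (q x / P x) - (∑ x, q x * c x) / μ + Real.log Z := by
    have hmid : ∑ x, q x * (c x / μ) = (∑ x, q x * c x) / μ := by
      rw [Finset.sum_div]; exact Finset.sum_congr rfl (fun x _ => by ring)
    rw [Finset.sum_congr rfl hterm, Finset.sum_add_distrib, Finset.sum_sub_distrib,
      ← Finset.sum_mul, hq1, one_mul, hmid]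
  rw [hident] at hkl
  have h3 : μ * (∑ x, q x * Real.log (q x / P x) - (∑ x, q x * c x) / μ + Real.log Z)
      = μ * ∑ x, q x * Real.log (q x / P x) - (∑ x, q x * c x) + μ * Real.log Z := by
    field_simp
  nlinarith [mul_nonneg hμ.le hkl]

lemma aux_r_id {X : Type*} [Fintype X] (μ : ℝ) (hμ : 0 < μ) (c P : X → ℝ)
    (hP0 : ∀ x, 0 < P x) (hne : Nonempty X) :
    (∑ x, (P x * Real.exp (c x / μ) / (∑ x', P x' * Real.exp (c x' / μ)))
        * Real.log ((P x * Real.exp (c x / μ) / (∑ x', P x' * Real.exp (c x' / μ))) / P x))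
    = (∑ x, (P x * Real.exp (c x / μ) / (∑ x', P x' * Real.exp (c x' / μ))) * c x) / μ
      - Real.log (∑ x', P x' * Real.exp (c x' / μ)) := by
  set Z := ∑ x', P x' * Real.exp (c x' / μ) with hZ
  have hZpos : 0 < Z := Finset.sum_pos (fun x _ => mul_pos (hP0 x) (Real.exp_pos _)) Finset.univ_nonempty
  have hr0 : ∀ x, 0 < P x * Real.exp (c x / μ) / Z :=
    fun x => div_pos (mul_pos (hP0 x) (Real.exp_pos _)) hZpos
  have hr1 : ∑ x, P x * Real.exp (c x / μ) / Z = 1 := by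
    rw [← Finset.sum_div, ← hZ, div_self (ne_of_gt hZpos)]
  have hterm : ∀ x ∈ Finset.univ,
      (P x * Real.exp (c x / μ) / Z) * Real.log ((P x * Real.exp (c x / μ) / Z) / P x)
      = (P x * Real.exp (c x / μ) / Z) * (c x / μ) - (P x * Real.exp (c x / μ) / Z) * Real.log Z := by
    intro x _
    have hlr : Real.log ((P x * Real.exp (c x / μ) / Z) / P x) = c x / μ - Real.log Z := by
      rw [Real.log_div (ne_of_gt (hr0 x)) (ne_of_gt (hP0 x)),
        Real.log_div (ne_of_gt (mul_pos (hP0 x) (Real.exp_pos _))) (ne_of_gt hZpos),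
        Real.log_mul (ne_of_gt (hP0 x)) (Real.exp_ne_zero _), Real.log_exp]
      ring
    rw [hlr]; ring
  have hmid : ∑ x, (P x * Real.exp (c x / μ) / Z) * (c x / μ)
      = (∑ x, (P x * Real.exp (c x / μ) / Z) * c x) / μ := by
    rw [Finset.sum_div]; exact Finset.sum_congr rfl (fun x _ => by ring)
  rw [Finset.sum_congr rfl hterm, Finset.sum_sub_distrib, ← Finset.sum_mul, hr1, one_mul, hmid]

lemma aux_exp (t : ℝ) (ht : 0 ≤ t) : Real.exp t - 1 ≤ t * Real.exp t := by
  have h := Real.add_one_le_exp (-t)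
  rw [Real.exp_neg] at h
  have hp := Real.exp_pos t
  have h2 : Real.exp t * (Real.exp t)⁻¹ = 1 := mul_inv_cancel₀ (ne_of_gt hp)
  nlinarith [mul_le_mul_of_nonneg_left h hp.le]

lemma aux_logZ {X : Type*} [Fintype X] (μ M : ℝ) (hμ1 : 1 ≤ μ) (hM : 0 ≤ M) (c P : X → ℝ)
    (hP0 : ∀ x, 0 ≤ P x) (hP1 : ∑ x, P x = 1) (hc : ∀ x, 0 ≤ c x) (hcM : ∀ x, c x ≤ M) :
    μ * Real.log (∑ x, P x * Real.exp (c x / μ))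
      ≤ ∑ x, P x * c x + ((∑ x, P x * c x) * M * Real.exp M) / μ := by
  have hμ0 : (0:ℝ) < μ := by linarith
  set Z := ∑ x, P x * Real.exp (c x / μ) with hZ
  have hZ1 : (1:ℝ) ≤ Z := by
    rw [hZ, ← hP1]
    apply Finset.sum_le_sum
    intro x _
    nth_rewrite 1 [← mul_one (P x)]
    exact mul_le_mul_of_nonneg_left (Real.one_le_exp (div_nonneg (hc x) hμ0.le)) (hP0 x)
  have hlog : Real.log Z ≤ Z - 1 := Real.log_le_sub_one_of_pos (by linarith)
  have h1 : ∑ x, P x * (μ * (Real.exp (c x / μ) - 1)) = μ * Z - μ * ∑ x, P x := by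
    rw [hZ, Finset.mul_sum, Finset.mul_sum, ← Finset.sum_sub_distrib]
    exact Finset.sum_congr rfl (fun x _ => by ring)
  have key : ∀ x ∈ Finset.univ, P x * (μ * (Real.exp (c x / μ) - 1))
      ≤ P x * (c x + c x * M * Real.exp M / μ) := by
    intro x _
    apply mul_le_mul_of_nonneg_left _ (hP0 x)
    set t := c x / μ with htdef
    have ht0 : 0 ≤ t := div_nonneg (hc x) hμ0.le
    have hh1 := aux_exp t ht0
    have h2 : Real.exp t - 1 ≤ t + t * t * Real.exp t := by
      nlinarith [mul_le_mul_of_nonneg_left hh1 ht0]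
    have hμt : μ * t = c x := by rw [htdef]; field_simp
    have htM : t ≤ M / μ := by
      rw [htdef]; exact (div_le_div_iff_of_pos_right hμ0).mpr (hcM x)
    have htM' : t ≤ M := le_trans htM (div_le_self hM hμ1)
    have hexp : Real.exp t ≤ Real.exp M := Real.exp_le_exp.mpr htM'
    have h3 : μ * (Real.exp t - 1) ≤ c x + c x * (t * Real.exp t) := by
      calc μ * (Real.exp t - 1) ≤ μ * (t + t * t * Real.exp t) :=
            mul_le_mul_of_nonneg_left h2 hμ0.le
        _ = c x + c x * (t * Real.exp t) := by rw [← hμt]; ring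
    have h4 : c x * (t * Real.exp t) ≤ c x * ((M / μ) * Real.exp M) := by
      apply mul_le_mul_of_nonneg_left _ (hc x)
      exact mul_le_mul htM hexp (Real.exp_pos t).le (div_nonneg hM hμ0.le)
    have h5 : c x * ((M / μ) * Real.exp M) = c x * M * Real.exp M / μ := by ring
    linarith
  have hsum := Finset.sum_le_sum key
  have hfin : ∑ x, P x * (c x + c x * M * Real.exp M / μ)
      = ∑ x, P x * c x + ((∑ x, P x * c x) * M * Real.exp M) / μ := by
    rw [show (∑ x, P x * c x) * M * Real.exp M / μ
        = (∑ x, P x * c x) * (M * Real.exp M / μ) from by ring,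
      Finset.sum_mul, ← Finset.sum_add_distrib]
    exact Finset.sum_congr rfl (fun x _ => by ring)
  calc μ * Real.log Z ≤ μ * (Z - 1) := mul_le_mul_of_nonneg_left hlog hμ0.le
    _ = ∑ x, P x * (μ * (Real.exp (c x / μ) - 1)) := by rw [h1, hP1]; ring
    _ ≤ ∑ x, P x * (c x + c x * M * Real.exp M / μ) := hsum
    _ = _ := hfin

/-- Lagrange duality:
`G^{(ν)}(E, p_Y|P) = inf_{μ ≥ 0} { μE + G^{(μ,ν)}(p_Y|P) }`. -/
theorem Gnu_eq_inf_Gmunu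
    {X Y : Type*} [Fintype X] [Fintype Y]
    (P : X → ℝ) (hP : IsProb P) (hPfull : ∀ x, 0 < P x)
    (pY : Y → ℝ) (hpY : IsProb pY)
    (d : X → Y → ℝ) (hd : ∀ x y, 0 ≤ d x y)
    (ν : ℝ) (hν : 0 ≤ ν) (E : ℝ) (hE : 0 ≤ E) :
    Gnu d ν E pY P = sInf { w | ∃ μ : ℝ, 0 ≤ μ ∧ w = μ * E + Gmunu d μ ν pY P } := by
  classical
  obtain ⟨hP0, hP1⟩ := hP
  obtain ⟨hpY0, hpY1⟩ := hpY
  have hneX : Nonempty X := by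
    by_contra h; rw [not_nonempty_iff] at h
    simp [Finset.univ_eq_empty] at hP1
  have hApos : ∀ x, 0 < Afun d ν pY x := by
    intro x
    obtain ⟨y, hy⟩ : ∃ y, 0 < pY y := by
      by_contra h; push_neg at h
      have : ∑ y, pY y ≤ 0 := Finset.sum_nonpos (fun y _ => h y)
      linarith
    exact Finset.sum_pos' (fun y _ => mul_nonneg (hpY0 y) (Real.exp_pos _).le)
      ⟨y, Finset.mem_univ y, mul_pos hy (Real.exp_pos _)⟩
  have hA1 : ∀ x, Afun d ν pY x ≤ 1 := by
    intro x
    have h : Afun d ν pY x = ∑ y, pY y * Real.exp (-(ν * d x y)) := rfl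
    rw [h, ← hpY1]
    apply Finset.sum_le_sum
    intro y _
    nth_rewrite 2 [← mul_one (pY y)]
    exact mul_le_mul_of_nonneg_left
      (Real.exp_le_one_iff.mpr (neg_nonpos.mpr (mul_nonneg hν (hd x y)))) (hpY0 y)
  set c : X → ℝ := fun x => -Real.log (Afun d ν pY x) with hcdef
  have hc0 : ∀ x, 0 ≤ c x := fun x => neg_nonneg.mpr (Real.log_nonpos (hApos x).le (hA1 x))
  have hrw : ∀ q : X → ℝ, -∑ x, q x * Real.log (Afun d ν pY x) = ∑ x, q x * c x := by
    intro q
    rw [← Finset.sum_neg_distrib]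
    exact Finset.sum_congr rfl (fun x _ => by simp only [hcdef]; ring)
  set M : ℝ := ∑ x, c x with hMdef
  have hcM : ∀ x, c x ≤ M := fun x => Finset.single_le_sum (fun x _ => hc0 x) (Finset.mem_univ x)
  have hM0 : 0 ≤ M := Finset.sum_nonneg (fun x _ => hc0 x)
  have hq_le_one : ∀ q : X → ℝ, IsProb q → ∀ x, q x ≤ 1 := by
    intro q hq x
    rw [← hq.2]
    exact Finset.single_le_sum (fun x _ => hq.1 x) (Finset.mem_univ x)
  have hfM : ∀ q : X → ℝ, IsProb q → ∑ x, q x * c x ≤ M := by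
    intro q hq
    rw [hMdef]
    apply Finset.sum_le_sum
    intro x _
    nth_rewrite 2 [← one_mul (c x)]
    exact mul_le_mul_of_nonneg_right (hq_le_one q hq x) (hc0 x)
  have hPP : klDivR P P = 0 := by
    apply Finset.sum_eq_zero
    intro x _
    rw [div_self (ne_of_gt (hPfull x)), Real.log_one, mul_zero]
  have hKL0 : ∀ q : X → ℝ, IsProb q → 0 ≤ klDivR q P := fun q hq =>
    aux_kl_nonneg q P hq.1 hq.2 hPfull hP1
  have hGnu_bdd : BddAbove { v | ∃ qX : X → ℝ, IsProb qX ∧ klDivR qX P ≤ E ∧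
      v = -∑ x, qX x * Real.log (Afun d ν pY x) } := by
    refine ⟨M, ?_⟩
    rintro v ⟨q, hq, _, rfl⟩
    rw [hrw q]
    exact hfM q hq
  have hGnu_ne : Set.Nonempty { v | ∃ qX : X → ℝ, IsProb qX ∧ klDivR qX P ≤ E ∧
      v = -∑ x, qX x * Real.log (Afun d ν pY x) } :=
    ⟨_, P, ⟨hP0, hP1⟩, by rw [hPP]; exact hE, rfl⟩
  have hGnu_ge : ∀ q : X → ℝ, IsProb q → klDivR q P ≤ E →
      ∑ x, q x * c x ≤ Gnu d ν E pY P := by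
    intro q hq hqE
    exact le_csSup hGnu_bdd ⟨q, hq, hqE, (hrw q).symm⟩
  have hGm_bdd : ∀ μ : ℝ, 0 ≤ μ → BddAbove { v | ∃ qX : X → ℝ, IsProb qX ∧
      v = -(μ * klDivR qX P) - ∑ x, qX x * Real.log (Afun d ν pY x) } := by
    intro μ hμ
    refine ⟨M, ?_⟩
    rintro v ⟨q, hq, rfl⟩
    have h1 : -∑ x, q x * Real.log (Afun d ν pY x) ≤ M := by rw [hrw q]; exact hfM q hq
    have h2 : 0 ≤ μ * klDivR q P := mul_nonneg hμ (hKL0 q hq)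
    linarith
  have hGm_ne : ∀ μ : ℝ, Set.Nonempty { v | ∃ qX : X → ℝ, IsProb qX ∧
      v = -(μ * klDivR qX P) - ∑ x, qX x * Real.log (Afun d ν pY x) } :=
    fun μ => ⟨_, P, ⟨hP0, hP1⟩, rfl⟩
  have hGm_ge : ∀ μ : ℝ, 0 ≤ μ → ∑ x, P x * c x ≤ Gmunu d μ ν pY P := by
    intro μ hμ
    have hv : ∑ x, P x * c x = -(μ * klDivR P P) - ∑ x, P x * Real.log (Afun d ν pY x) := by
      rw [hPP, mul_zero, neg_zero, zero_sub, hrw P]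
    exact le_csSup (hGm_bdd μ hμ) ⟨P, ⟨hP0, hP1⟩, hv⟩
  set S : Set ℝ := { w | ∃ μ : ℝ, 0 ≤ μ ∧ w = μ * E + Gmunu d μ ν pY P } with hSdef
  have hS_ne : Set.Nonempty S := ⟨_, 0, le_refl 0, rfl⟩
  have hPc0 : 0 ≤ ∑ x, P x * c x := Finset.sum_nonneg (fun x _ => mul_nonneg (hP0 x) (hc0 x))
  have hS_bdd : BddBelow S := by
    refine ⟨0, ?_⟩
    rintro w ⟨μ, hμ, rfl⟩
    have h1 := hGm_ge μ hμ
    have h3 : 0 ≤ μ * E := mul_nonneg hμ hE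
    linarith
  apply le_antisymm
  · apply le_csInf hS_ne
    rintro w ⟨μ, hμ, rfl⟩
    apply csSup_le hGnu_ne
    rintro v ⟨q, hq, hqE, rfl⟩
    have h1 : -(μ * klDivR q P) - ∑ x, q x * Real.log (Afun d ν pY x) ≤ Gmunu d μ ν pY P :=
      le_csSup (hGm_bdd μ hμ) ⟨q, hq, rfl⟩
    have h2 : μ * klDivR q P ≤ μ * E := mul_le_mul_of_nonneg_left hqE hμ
    linarith
  · apply le_of_forall_pos_le_add
    intro ε hε
    have hZpos : ∀ μ : ℝ, 0 < ∑ x, P x * Real.exp (c x / μ) :=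
      fun μ => Finset.sum_pos (fun x _ => mul_pos (hPfull x) (Real.exp_pos _)) Finset.univ_nonempty
    set rf : ℝ → X → ℝ :=
      fun μ x => P x * Real.exp (c x / μ) / (∑ x', P x' * Real.exp (c x' / μ)) with hrf
    have hr0 : ∀ μ : ℝ, ∀ x, 0 < rf μ x :=
      fun μ x => div_pos (mul_pos (hPfull x) (Real.exp_pos _)) (hZpos μ)
    have hr1 : ∀ μ : ℝ, ∑ x, rf μ x = 1 := by
      intro μ
      simp only [hrf]
      rw [← Finset.sum_div, div_self (ne_of_gt (hZpos μ))]
    have hrprob : ∀ μ, IsProb (rf μ) := fun μ => ⟨fun x => (hr0 μ x).le, hr1 μ⟩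
    set Kf : ℝ → ℝ := fun μ => klDivR (rf μ) P with hKfdef
    have hKval : ∀ μ : ℝ, 0 < μ → Kf μ = (∑ x, rf μ x * c x) / μ
        - Real.log (∑ x', P x' * Real.exp (c x' / μ)) :=
      fun μ hμ => aux_r_id μ hμ c P hPfull hneX
    have hK0 : ∀ μ : ℝ, 0 ≤ Kf μ := fun μ => hKL0 (rf μ) (hrprob μ)
    have hZ1 : ∀ μ : ℝ, 0 < μ → 1 ≤ ∑ x, P x * Real.exp (c x / μ) := by
      intro μ hμ
      rw [← hP1]
      apply Finset.sum_le_sum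
      intro x _
      nth_rewrite 1 [← mul_one (P x)]
      exact mul_le_mul_of_nonneg_left (Real.one_le_exp (div_nonneg (hc0 x) hμ.le)) (hP0 x)
    have hKM : ∀ μ : ℝ, 0 < μ → Kf μ ≤ M / μ := by
      intro μ hμ
      rw [hKval μ hμ]
      have h1 : ∑ x, rf μ x * c x ≤ M := hfM (rf μ) (hrprob μ)
      have h2 : 0 ≤ Real.log (∑ x', P x' * Real.exp (c x' / μ)) :=
        Real.log_nonneg (hZ1 μ hμ)
      have h3 : (∑ x, rf μ x * c x) / μ ≤ M / μ := by gcongr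
      linarith
    have hGmZ : ∀ μ : ℝ, 0 < μ →
        Gmunu d μ ν pY P ≤ μ * Real.log (∑ x, P x * Real.exp (c x / μ)) := by
      intro μ hμ
      apply csSup_le (hGm_ne μ)
      rintro v ⟨q, hq, rfl⟩
      have hg := aux_gibbs μ hμ c P q hPfull hq.1 hq.2
      have hv : -(μ * klDivR q P) - ∑ x, q x * Real.log (Afun d ν pY x)
          = ∑ x, q x * c x - μ * ∑ x, q x * Real.log (q x / P x) :=
        calc -(μ * klDivR q P) - ∑ x, q x * Real.log (Afun d ν pY x)
            = (-∑ x, q x * Real.log (Afun d ν pY x)) - μ * klDivR q P := by ring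
          _ = ∑ x, q x * c x - μ * ∑ x, q x * Real.log (q x / P x) := by rw [hrw q]; rfl
      rw [hv]
      exact hg
    have hid : ∀ μ : ℝ, 0 < μ → μ * Real.log (∑ x, P x * Real.exp (c x / μ))
        = ∑ x, rf μ x * c x - μ * Kf μ := by
      intro μ hμ
      rw [hKval μ hμ]
      field_simp
      ring
    have hmain : ∀ μ : ℝ, 0 < μ → Kf μ ≤ E →
        sInf S ≤ Gnu d ν E pY P + μ * (E - Kf μ) := by
      intro μ hμ hKE
      have h1 : sInf S ≤ μ * E + Gmunu d μ ν pY P := csInf_le hS_bdd ⟨μ, hμ.le, rfl⟩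
      have h2 := hGmZ μ hμ
      have h3 := hid μ hμ
      have h4 : ∑ x, rf μ x * c x ≤ Gnu d ν E pY P := hGnu_ge (rf μ) (hrprob μ) hKE
      linarith
    by_cases hE0 : E = 0
    · set D : ℝ := (∑ x, P x * c x) * M * Real.exp M with hDdef
      have hD0 : 0 ≤ D := mul_nonneg (mul_nonneg hPc0 hM0) (Real.exp_pos _).le
      set μ0 : ℝ := max 1 (D / ε) with hμ0def
      have hμ01 : (1:ℝ) ≤ μ0 := le_max_left _ _
      have hμ0pos : (0:ℝ) < μ0 := by linarith
      have hlogZ := aux_logZ μ0 M hμ01 hM0 c P hP0 hP1 hc0 hcM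
      have hDμ : D / μ0 ≤ ε := by
        rw [div_le_iff₀ hμ0pos]
        have hle : D / ε ≤ μ0 := le_max_right _ _
        calc D = ε * (D / ε) := by field_simp
          _ ≤ ε * μ0 := mul_le_mul_of_nonneg_left hle hε.le
      have h1 : sInf S ≤ μ0 * E + Gmunu d μ0 ν pY P := csInf_le hS_bdd ⟨μ0, hμ0pos.le, rfl⟩
      have h2 := hGmZ μ0 hμ0pos
      have h4 : ∑ x, P x * c x ≤ Gnu d ν E pY P :=
        hGnu_ge P ⟨hP0, hP1⟩ (by rw [hPP]; exact hE)
      have h5 : μ0 * E = 0 := by rw [hE0, mul_zero]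
      linarith
    · have hEpos : 0 < E := lt_of_le_of_ne hE (Ne.symm hE0)
      set a : ℝ := ε / E with hadef
      have hapos : 0 < a := div_pos hε hEpos
      by_cases hKa : Kf a ≤ E
      · have hm := hmain a hapos hKa
        have haE : a * (E - Kf a) ≤ ε := by
          have h1 : a * (E - Kf a) ≤ a * E :=
            mul_le_mul_of_nonneg_left (by linarith [hK0 a]) hapos.le
          have h2 : a * E = ε := by rw [hadef]; field_simp
          linarith
        linarith
      · push_neg at hKa
        set b : ℝ := a + M / E + 1 with hbdef
        have hab : a ≤ b := by
          have := div_nonneg hM0 hEpos.le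
          rw [hbdef]; linarith
        have hbpos : 0 < b := lt_of_lt_of_le hapos hab
        have hKb : Kf b ≤ E := by
          have h1 := hKM b hbpos
          have h2 : M / b ≤ E := by
            rw [div_le_iff₀ hbpos]
            have hEb : E * b = E * a + M + E := by rw [hbdef]; field_simp
            nlinarith [mul_nonneg hEpos.le hapos.le]
          linarith
        set Kg : ℝ → ℝ := fun μ => (∑ x, P x * Real.exp (c x / μ) * c x)
            / ((∑ x, P x * Real.exp (c x / μ)) * μ)
            - Real.log (∑ x, P x * Real.exp (c x / μ)) with hKgdef
        have hKg : ∀ μ ∈ Set.Icc a b, Kg μ = Kf μ := by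
          intro μ hμmem
          have hμ : 0 < μ := lt_of_lt_of_le hapos hμmem.1
          rw [hKval μ hμ]
          have hnum : ∑ x, rf μ x * c x
              = (∑ x, P x * Real.exp (c x / μ) * c x) / (∑ x', P x' * Real.exp (c x' / μ)) := by
            rw [Finset.sum_div]
            exact Finset.sum_congr rfl (fun x _ => by simp only [hrf]; ring)
          rw [hnum, hKgdef]
          rw [div_div]
        have hμne : ∀ μ ∈ Set.Icc a b, μ ≠ 0 :=
          fun μ hμ => ne_of_gt (lt_of_lt_of_le hapos hμ.1)
        have hZcont : ContinuousOn (fun μ : ℝ => ∑ x, P x * Real.exp (c x / μ))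
            (Set.Icc a b) := by
          apply continuousOn_finset_sum
          intro x _
          exact continuousOn_const.mul (Real.continuous_exp.comp_continuousOn
            (continuousOn_const.div continuousOn_id (hμne)))
        have hNcont : ContinuousOn (fun μ : ℝ => ∑ x, P x * Real.exp (c x / μ) * c x)
            (Set.Icc a b) := by
          apply continuousOn_finset_sum
          intro x _
          exact (continuousOn_const.mul (Real.continuous_exp.comp_continuousOn
            (continuousOn_const.div continuousOn_id (hμne)))).mul continuousOn_const
        have hZne : ∀ μ ∈ Set.Icc a b, (∑ x, P x * Real.exp (c x / μ)) ≠ 0 :=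
          fun μ _ => ne_of_gt (hZpos μ)
        have hKgcont : ContinuousOn Kg (Set.Icc a b) := by
          apply ContinuousOn.sub
          · exact hNcont.div (hZcont.mul continuousOn_id)
              (fun μ hμ => mul_ne_zero (hZne μ hμ) (hμne μ hμ))
          · exact hZcont.log hZne
        have hcont : ContinuousOn Kf (Set.Icc a b) :=
          ContinuousOn.congr hKgcont (fun μ hμ => (hKg μ hμ).symm)
        have hivt := intermediate_value_Icc' hab hcont
        obtain ⟨μs, hμsmem, hμsval⟩ := hivt ⟨hKb, hKa.le⟩
        have hμspos : 0 < μs := lt_of_lt_of_le hapos hμsmem.1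
        have hm := hmain μs hμspos (le_of_eq hμsval)
        have hz : μs * (E - Kf μs) = 0 := by rw [hμsval]; ring
        linarith
end
end

section
/- In Ahlswede's example, for any probability distribution P on 𝒳 = 𝒳_A ∪ 𝒳_B and any Δ ≥ 0, setting ξ = Σ_{x ∈ 𝒳_A} P(x), one has R(Δ | ξQ_A + (1−ξ)Q_B) ≥ R(Δ|P); that is, among all distributions with a given mass ξ on 𝒳_A, the mixture of uniform distributions maximizes the rate-distortion function. -/
open scoped Classical

noncomputable section

/-- Ahlswede's distortion measure on `𝒳 = 𝒳_A ⊕ 𝒳_B` (with `𝒴 = 𝒳`). -/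
def dAhl {A B : Type*} [DecidableEq A] [DecidableEq B] (a b : ℝ) :
    A ⊕ B → A ⊕ B → ℝ
  | Sum.inl x, Sum.inl y => if x = y then 0 else 1
  | Sum.inr x, Sum.inr y => if x = y then 0 else a
  | _, _ => b

/-- The uniform distribution on `𝒳_A`, viewed as a distribution on `𝒳_A ⊕ 𝒳_B`. -/
def QA {A B : Type*} [Fintype A] : A ⊕ B → ℝ
  | Sum.inl _ => ((Fintype.card A : ℝ))⁻¹
  | Sum.inr _ => 0

/-- The uniform distribution on `𝒳_B`, viewed as a distribution on `𝒳_A ⊕ 𝒳_B`. -/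
def QB {A B : Type*} [Fintype B] : A ⊕ B → ℝ
  | Sum.inl _ => 0
  | Sum.inr _ => ((Fintype.card B : ℝ))⁻¹

/-- The mixture `Q_λ = λ Q_A + (1−λ) Q_B`. -/
def Qmix {A B : Type*} [Fintype A] [Fintype B] (lam : ℝ) (z : A ⊕ B) : ℝ :=
  lam * QA z + (1 - lam) * QB z

/-- The binary Kullback–Leibler divergence `D_2(p‖q)`. -/
def D2 (p q : ℝ) : ℝ :=
  p * Real.log (p / q) + (1 - p) * Real.log ((1 - p) / (1 - q))

set_option linter.unusedSectionVars false

/-- Log-sum inequality. -/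
lemma log_sum_ineq {ι : Type*} [Fintype ι] (f g : ι → ℝ)
    (hf : ∀ i, 0 ≤ f i) (hg : ∀ i, 0 ≤ g i) (hfg : ∀ i, g i = 0 → f i = 0) :
    (∑ i, f i) * Real.log ((∑ i, f i) / (∑ i, g i)) ≤ ∑ i, f i * Real.log (f i / g i) := by
  set F := ∑ i, f i with hF
  set G := ∑ i, g i with hG
  rcases eq_or_lt_of_le (Finset.sum_nonneg (fun i _ => hf i)) with h0 | hFpos
  · -- F = 0, all f i = 0
    have hall : ∀ i ∈ Finset.univ, f i = 0 :=
      (Finset.sum_eq_zero_iff_of_nonneg (fun i _ => hf i)).1 h0.symm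
    have : ∑ i, f i * Real.log (f i / g i) = 0 :=
      Finset.sum_eq_zero (fun i hi => by rw [hall i hi]; ring)
    rw [this, hF, ← h0]; simp
  · -- F > 0
    have hGpos : 0 < G := by
      obtain ⟨i, -, hi⟩ := Finset.exists_lt_of_sum_lt (f := fun _ => (0:ℝ)) (g := f)
        (by simpa using hFpos)
      have hgi : 0 < g i := by
        rcases (hg i).eq_or_lt with h | h
        · exact absurd (hfg i h.symm) (by linarith)
        · exact h
      exact lt_of_lt_of_le hgi (Finset.single_le_sum (fun j _ => hg j) (Finset.mem_univ i))
    have key : ∀ i, f i * Real.log (F / G) + (f i - g i * (F / G)) ≤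
        f i * Real.log (f i / g i) := by
      intro i
      rcases (hf i).eq_or_lt with h0 | hfi
      · rw [← h0]
        have : (0:ℝ) ≤ g i * (F / G) := mul_nonneg (hg i) (le_of_lt (div_pos hFpos hGpos))
        simp only [zero_mul, zero_add, zero_sub]
        linarith
      · have hgi : 0 < g i := by
          rcases (hg i).eq_or_lt with h | h
          · exact absurd (hfg i h.symm) (by linarith)
          · exact h
        set t := f i * G / (g i * F) with ht
        have htpos : 0 < t := div_pos (mul_pos hfi hGpos) (mul_pos hgi hFpos)
        have hsplit : Real.log (f i / g i) = Real.log (F / G) + Real.log t := by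
          have hx : f i / g i = F / G * t := by
            rw [ht]
            field_simp
            ring_nf
            exact (mul_inv_cancel₀ hFpos.ne').symm
          rw [hx, Real.log_mul (by positivity) (by positivity)]
        have hlog : 1 - t⁻¹ ≤ Real.log t := Real.one_sub_inv_le_log_of_pos htpos
        have hft : f i * t⁻¹ = g i * (F / G) := by
          rw [ht]
          field_simp
        have : f i - g i * (F / G) ≤ f i * Real.log t := by
          have := mul_le_mul_of_nonneg_left hlog (le_of_lt hfi)
          rw [mul_sub, mul_one, hft] at this
          linarith
        rw [hsplit, mul_add]
        linarith
    calc F * Real.log (F / G)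
        = ∑ i, (f i * Real.log (F / G) + (f i - g i * (F / G))) := by
          rw [Finset.sum_add_distrib, Finset.sum_sub_distrib, ← Finset.sum_mul, ← hF,
            ← Finset.sum_mul, ← hG]
          field_simp
          ring
      _ ≤ ∑ i, f i * Real.log (f i / g i) := Finset.sum_le_sum (fun i _ => key i)

def permShift {C : Type*} [Fintype C] [Nonempty C] (k : Fin (Fintype.card C)) : C ≃ C :=
  letI : NeZero (Fintype.card C) := ⟨Fintype.card_ne_zero⟩
  ((Fintype.equivFin C).trans (Equiv.addLeft k)).trans (Fintype.equivFin C).symm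

lemma sum_permShift {C : Type*} [Fintype C] [Nonempty C] (x0 : C) (f : C → ℝ) :
    ∑ k : Fin (Fintype.card C), f (permShift k x0) = ∑ x : C, f x := by
  letI : NeZero (Fintype.card C) := ⟨Fintype.card_ne_zero⟩
  exact Fintype.sum_equiv
    ((Equiv.addRight ((Fintype.equivFin C) x0)).trans (Fintype.equivFin C).symm) _ _
    (fun k => rfl)

lemma sum_permShift_symm {C : Type*} [Fintype C] [Nonempty C] (x0 : C) (f : C → ℝ) :
    ∑ k : Fin (Fintype.card C), f ((permShift k).symm x0) = ∑ x : C, f x := by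
  letI : NeZero (Fintype.card C) := ⟨Fintype.card_ne_zero⟩
  exact Fintype.sum_equiv
    ((Equiv.neg _).trans ((Equiv.addRight ((Fintype.equivFin C) x0)).trans
      (Fintype.equivFin C).symm)) _ _
    (fun k => rfl)

section EPerm

variable {A B : Type*} [Fintype A] [Fintype B] [Nonempty A] [Nonempty B]

/-- the symmetrizing permutations of `A ⊕ B` -/
def ePerm (g : Fin (Fintype.card A) × Fin (Fintype.card B)) : (A ⊕ B) ≃ (A ⊕ B) :=
  Equiv.sumCongr (permShift g.1) (permShift g.2)

lemma ePerm_inl (g : Fin (Fintype.card A) × Fin (Fintype.card B)) (x : A) :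
    ePerm (A := A) (B := B) g (Sum.inl x) = Sum.inl (permShift g.1 x) := rfl

lemma ePerm_inr (g : Fin (Fintype.card A) × Fin (Fintype.card B)) (x : B) :
    ePerm (A := A) (B := B) g (Sum.inr x) = Sum.inr (permShift g.2 x) := rfl

lemma ePerm_symm_inl (g : Fin (Fintype.card A) × Fin (Fintype.card B)) (x : A) :
    (ePerm (A := A) (B := B) g).symm (Sum.inl x) = Sum.inl ((permShift g.1).symm x) := rfl

lemma ePerm_symm_inr (g : Fin (Fintype.card A) × Fin (Fintype.card B)) (x : B) :
    (ePerm (A := A) (B := B) g).symm (Sum.inr x) = Sum.inr ((permShift g.2).symm x) := rfl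

variable [DecidableEq A] [DecidableEq B]

lemma dAhl_ePerm (a b : ℝ) (g : Fin (Fintype.card A) × Fin (Fintype.card B))
    (u v : A ⊕ B) :
    dAhl a b (ePerm (A := A) (B := B) g u) (ePerm (A := A) (B := B) g v) = dAhl a b u v := by
  cases u <;> cases v <;>
    simp [dAhl, ePerm_inl, ePerm_inr, Equiv.apply_eq_iff_eq]

lemma dAhl_ePerm_symm (a b : ℝ) (g : Fin (Fintype.card A) × Fin (Fintype.card B))
    (u v : A ⊕ B) :
    dAhl a b ((ePerm (A := A) (B := B) g).symm u) ((ePerm (A := A) (B := B) g).symm v)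
      = dAhl a b u v := by
  have := dAhl_ePerm (A := A) (B := B) a b g ((ePerm (A := A) (B := B) g).symm u)
    ((ePerm (A := A) (B := B) g).symm v)
  simpa using this.symm

lemma Qmix_ePerm (lam : ℝ) (g : Fin (Fintype.card A) × Fin (Fintype.card B)) (z : A ⊕ B) :
    Qmix (A := A) (B := B) lam (ePerm (A := A) (B := B) g z) = Qmix lam z := by
  cases z <;> rfl

lemma Qmix_ePerm_symm (lam : ℝ) (g : Fin (Fintype.card A) × Fin (Fintype.card B)) (z : A ⊕ B) :
    Qmix (A := A) (B := B) lam ((ePerm (A := A) (B := B) g).symm z) = Qmix lam z := by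
  cases z <;> rfl

lemma sum_ePerm_inl (F : A ⊕ B → ℝ) (x0 : A) :
    ∑ g : Fin (Fintype.card A) × Fin (Fintype.card B), F (ePerm (A := A) (B := B) g (Sum.inl x0))
      = (Fintype.card B : ℝ) * ∑ x : A, F (Sum.inl x) := by
  rw [Fintype.sum_prod_type]
  simp only [ePerm_inl]
  rw [Finset.sum_congr rfl (fun k _ => Finset.sum_const (F (Sum.inl (permShift k x0))))]
  simp only [Finset.card_univ, Fintype.card_fin, nsmul_eq_mul]
  rw [← Finset.mul_sum, sum_permShift x0 (fun x => F (Sum.inl x))]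

lemma sum_ePerm_inr (F : A ⊕ B → ℝ) (x0 : B) :
    ∑ g : Fin (Fintype.card A) × Fin (Fintype.card B), F (ePerm (A := A) (B := B) g (Sum.inr x0))
      = (Fintype.card A : ℝ) * ∑ x : B, F (Sum.inr x) := by
  rw [Fintype.sum_prod_type]
  simp only [ePerm_inr]
  rw [Finset.sum_congr rfl (fun k _ => sum_permShift x0 (fun x => F (Sum.inr x)))]
  rw [Finset.sum_const]
  simp only [Finset.card_univ, Fintype.card_fin, nsmul_eq_mul]

lemma sum_ePerm_symm_inl (F : A ⊕ B → ℝ) (x0 : A) :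
    ∑ g : Fin (Fintype.card A) × Fin (Fintype.card B),
        F ((ePerm (A := A) (B := B) g).symm (Sum.inl x0))
      = (Fintype.card B : ℝ) * ∑ x : A, F (Sum.inl x) := by
  rw [Fintype.sum_prod_type]
  simp only [ePerm_symm_inl]
  rw [Finset.sum_congr rfl (fun k _ => Finset.sum_const (F (Sum.inl ((permShift k).symm x0))))]
  simp only [Finset.card_univ, Fintype.card_fin, nsmul_eq_mul]
  rw [← Finset.mul_sum, sum_permShift_symm x0 (fun x => F (Sum.inl x))]

lemma sum_ePerm_symm_inr (F : A ⊕ B → ℝ) (x0 : B) :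
    ∑ g : Fin (Fintype.card A) × Fin (Fintype.card B),
        F ((ePerm (A := A) (B := B) g).symm (Sum.inr x0))
      = (Fintype.card A : ℝ) * ∑ x : B, F (Sum.inr x) := by
  rw [Fintype.sum_prod_type]
  simp only [ePerm_symm_inr]
  rw [Finset.sum_congr rfl (fun k _ => sum_permShift_symm x0 (fun x => F (Sum.inr x)))]
  rw [Finset.sum_const]
  simp only [Finset.card_univ, Fintype.card_fin, nsmul_eq_mul]

end EPerm

/-- swap a triple sum -/
lemma sum3_swap {α β γ : Type*} [Fintype α] [Fintype β] [Fintype γ] (t : α → β → γ → ℝ) :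
    ∑ x : α, ∑ y : β, ∑ g : γ, t x y g = ∑ g : γ, ∑ x : α, ∑ y : β, t x y g := by
  calc ∑ x : α, ∑ y : β, ∑ g : γ, t x y g
      = ∑ x : α, ∑ g : γ, ∑ y : β, t x y g :=
        Finset.sum_congr rfl (fun x _ => Finset.sum_comm)
    _ = ∑ g : γ, ∑ x : α, ∑ y : β, t x y g := Finset.sum_comm

/-- reindex a double sum by a permutation -/
lemma sum2_perm {Z : Type*} [Fintype Z] (σ : Z ≃ Z) (F : Z → Z → ℝ) :
    ∑ x, ∑ y, F x y = ∑ x, ∑ y, F (σ x) (σ y) := by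
  rw [← Equiv.sum_comp σ (fun x => ∑ y, F x y)]
  exact Finset.sum_congr rfl (fun x _ => (Equiv.sum_comp σ (F (σ x))).symm)

lemma sum_pull {ι : Type*} [Fintype ι] (c u v : ℝ) (f : ι → ℝ) :
    u * (c * ∑ g, f g) * v = ∑ g, c * (u * f g * v) := by
  rw [← Finset.mul_sum, ← Finset.sum_mul, ← Finset.mul_sum]; ring

lemma sum_pull2 {ι : Type*} [Fintype ι] (c w : ℝ) (p : ι → ℝ) :
    ∑ g, c * (p g * w) = (c * ∑ g, p g) * w := by
  rw [Finset.mul_sum, Finset.sum_mul]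
  exact Finset.sum_congr rfl (fun g _ => by ring)

lemma mutualInfo_nonneg {X Y : Type*} [Fintype X] [Fintype Y] (q : X → ℝ) (W : X → Y → ℝ)
    (hq : IsProb q) (hW : IsKernel W) : 0 ≤ mutualInfo q W := by
  obtain ⟨hq0, hq1⟩ := hq
  obtain ⟨hW0, hW1⟩ := hW
  have hout0 : ∀ y, 0 ≤ ∑ x, q x * W x y :=
    fun y => Finset.sum_nonneg (fun x _ => mul_nonneg (hq0 x) (hW0 x y))
  have houtsum : ∑ y, ∑ x, q x * W x y = 1 := by
    rw [Finset.sum_comm]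
    calc ∑ x, ∑ y : Y, q x * W x y = ∑ x, q x * ∑ y, W x y :=
          Finset.sum_congr rfl (fun x _ => (Finset.mul_sum _ _ _).symm)
      _ = 1 := by simp only [hW1, mul_one]; exact hq1
  have key := log_sum_ineq (ι := X × Y) (fun p => q p.1 * W p.1 p.2)
    (fun p => q p.1 * ∑ x, q x * W x p.2)
    (fun p => mul_nonneg (hq0 _) (hW0 _ _))
    (fun p => mul_nonneg (hq0 _) (hout0 _))
    (fun p hp => by
      rcases mul_eq_zero.1 hp with h | h
      · simp [h]
      · exact (Finset.sum_eq_zero_iff_of_nonneg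
          (fun x _ => mul_nonneg (hq0 x) (hW0 x p.2))).1 h p.1 (Finset.mem_univ _))
  have hfsum : ∑ p : X × Y, q p.1 * W p.1 p.2 = 1 := by
    rw [Fintype.sum_prod_type]
    calc ∑ x, ∑ y : Y, q x * W x y = ∑ x, q x * ∑ y, W x y :=
          Finset.sum_congr rfl (fun x _ => (Finset.mul_sum _ _ _).symm)
      _ = 1 := by simp only [hW1, mul_one]; exact hq1
  have hgsum : ∑ p : X × Y, q p.1 * ∑ x, q x * W x p.2 = 1 := by
    rw [Fintype.sum_prod_type]
    calc ∑ x, ∑ y : Y, q x * ∑ x', q x' * W x' y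
        = ∑ x, q x * ∑ y, ∑ x', q x' * W x' y :=
          Finset.sum_congr rfl (fun x _ => (Finset.mul_sum _ _ _).symm)
      _ = 1 := by rw [Finset.sum_congr rfl (fun (x : X) _ => by rw [houtsum])]; simpa using hq1
  rw [hfsum, hgsum] at key
  norm_num at key
  have hrw : mutualInfo q W
      = ∑ p : X × Y, (q p.1 * W p.1 p.2) *
          Real.log ((q p.1 * W p.1 p.2) / (q p.1 * ∑ x, q x * W x p.2)) := by
    rw [mutualInfo, Fintype.sum_prod_type]
    refine Finset.sum_congr rfl (fun x _ => Finset.sum_congr rfl (fun y _ => ?_))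
    by_cases hqx : q x = 0
    · simp [hqx]
    · rw [mul_div_mul_left _ _ hqx]
  rw [hrw]
  exact key

abbrev symGrp (A B : Type*) [Fintype A] [Fintype B] :=
  Fin (Fintype.card A) × Fin (Fintype.card B)

/-- in Ahlswede's example, with `ξ = Σ_{x ∈ 𝒳_A} P(x)`, the mixture of
uniform distributions dominates: `R(Δ | ξ Q_A + (1−ξ) Q_B) ≥ R(Δ|P)`. -/
theorem rdFun_mixture_ge_ahlswede
    {A B : Type*} [Fintype A] [Fintype B] [Nonempty A] [Nonempty B]
    [DecidableEq A] [DecidableEq B]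
    (a b : ℝ) (ha : 0 < a) (hb : 0 < b)
    (P : A ⊕ B → ℝ) (hP : IsProb P)
    (Δ : ℝ) (hΔ : 0 ≤ Δ) :
    rdFun (dAhl (A := A) (B := B) a b) Δ P ≤
      rdFun (dAhl (A := A) (B := B) a b) Δ
        (Qmix (A := A) (B := B) (∑ x : A, P (Sum.inl x))) := by
  classical
  obtain ⟨hP0, hP1⟩ := hP
  set ξ : ℝ := ∑ x : A, P (Sum.inl x) with hξdef
  have hnA : (0:ℝ) < (Fintype.card A : ℝ) := by exact_mod_cast Fintype.card_pos
  have hnB : (0:ℝ) < (Fintype.card B : ℝ) := by exact_mod_cast Fintype.card_pos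
  set N : ℝ := (Fintype.card A : ℝ) * (Fintype.card B : ℝ) with hNdef
  have hN : 0 < N := mul_pos hnA hnB
  have hNi : (N:ℝ)⁻¹ ≠ 0 := inv_ne_zero hN.ne'
  have hNi0 : (0:ℝ) ≤ N⁻¹ := inv_nonneg.2 hN.le
  have hξ0 : 0 ≤ ξ := Finset.sum_nonneg (fun x _ => hP0 _)
  have hsplitP : ξ + ∑ x : B, P (Sum.inr x) = 1 := by
    rw [hξdef, ← Fintype.sum_sum_type]; exact hP1
  have hξB : 0 ≤ ∑ x : B, P (Sum.inr x) := Finset.sum_nonneg (fun x _ => hP0 _)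
  have hξ1 : ξ ≤ 1 := by linarith
  have hQl : ∀ x : A, Qmix (A := A) (B := B) ξ (Sum.inl x) = ξ * (Fintype.card A : ℝ)⁻¹ := by
    intro x; simp [Qmix, QA, QB]
  have hQr : ∀ x : B, Qmix (A := A) (B := B) ξ (Sum.inr x) = (1 - ξ) * (Fintype.card B : ℝ)⁻¹ := by
    intro x; simp [Qmix, QA, QB]
  have hQ0 : ∀ z, 0 ≤ Qmix (A := A) (B := B) ξ z := by
    intro z
    cases z with
    | inl x => rw [hQl]; exact mul_nonneg hξ0 (inv_nonneg.2 hnA.le)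
    | inr x => rw [hQr]; exact mul_nonneg (by linarith) (inv_nonneg.2 hnB.le)
  have hQsum : ∑ z, Qmix (A := A) (B := B) ξ z = 1 := by
    rw [Fintype.sum_sum_type]
    rw [Finset.sum_congr rfl (fun x _ => hQl x), Finset.sum_congr rfl (fun x _ => hQr x)]
    rw [Finset.sum_const, Finset.sum_const]
    simp only [Finset.card_univ, nsmul_eq_mul]
    field_simp
    ring
  have hQP : ∀ z, Qmix (A := A) (B := B) ξ z = 0 → P z = 0 := by
    intro z hz
    cases z with
    | inl x =>
      rw [hQl] at hz
      have hξz : ξ = 0 := by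
        rcases mul_eq_zero.1 hz with h | h
        · exact h
        · exact absurd h (inv_ne_zero hnA.ne')
      have hsum0 : ∑ x : A, P (Sum.inl x) = 0 := by rw [← hξdef]; exact hξz
      exact (Finset.sum_eq_zero_iff_of_nonneg (fun x _ => hP0 _)).1 hsum0 x (Finset.mem_univ x)
    | inr x =>
      rw [hQr] at hz
      have hξz : 1 - ξ = 0 := by
        rcases mul_eq_zero.1 hz with h | h
        · exact h
        · exact absurd h (inv_ne_zero hnB.ne')
      have hsum0 : ∑ x : B, P (Sum.inr x) = 0 := by linarith
      exact (Finset.sum_eq_zero_iff_of_nonneg (fun x _ => hP0 _)).1 hsum0 x (Finset.mem_univ x)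
  have hcard1 : ∑ _g : symGrp A B, (1:ℝ) = N := by
    rw [Finset.sum_const]
    simp [Finset.card_univ, hNdef]
  -- the Q-side sums of P over the symmetrizing group
  have sumPeSymm : ∀ z, ∑ g : symGrp A B, P ((ePerm (A := A) (B := B) g).symm z)
      = N * Qmix (A := A) (B := B) ξ z := by
    intro z
    cases z with
    | inl x0 =>
      rw [sum_ePerm_symm_inl P x0, ← hξdef, hQl, hNdef]
      field_simp
    | inr x0 =>
      rw [sum_ePerm_symm_inr P x0, hQr, hNdef]
      have : ∑ x : B, P (Sum.inr x) = 1 - ξ := by linarith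
      rw [this]
      field_simp
  have hbdd : BddBelow { r | ∃ W, IsKernel W ∧
      (∑ x, ∑ y, P x * W x y * dAhl (A := A) (B := B) a b x y) ≤ Δ ∧ r = mutualInfo P W } := by
    refine ⟨0, ?_⟩
    rintro r ⟨W, hK, -, rfl⟩
    exact mutualInfo_nonneg P W ⟨hP0, hP1⟩ hK
  unfold rdFun
  refine le_csInf ?_ ?_
  · -- the Q-feasible set is nonempty (identity kernel)
    refine ⟨mutualInfo (Qmix (A := A) (B := B) ξ) (fun x y => if x = y then (1:ℝ) else 0),
      (fun x y => if x = y then (1:ℝ) else 0), ⟨fun x y => ?_, fun x => by simp⟩, ?_, rfl⟩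
    · dsimp only; split <;> norm_num
    · have hzero : ∀ x ∈ Finset.univ, ∀ y ∈ (Finset.univ : Finset (A ⊕ B)),
          Qmix (A := A) (B := B) ξ x * (if x = y then (1:ℝ) else 0)
            * dAhl (A := A) (B := B) a b x y = 0 := by
        intro x _ y _
        by_cases h : x = y
        · subst h
          have hd : dAhl (A := A) (B := B) a b x x = 0 := by cases x <;> simp [dAhl]
          rw [hd, mul_zero]
        · rw [if_neg h]; ring
      calc ∑ x, ∑ y, Qmix (A := A) (B := B) ξ x * (if x = y then (1:ℝ) else 0)
            * dAhl (A := A) (B := B) a b x y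
          = 0 := by
            refine Finset.sum_eq_zero fun x hx => Finset.sum_eq_zero fun y hy => hzero x hx y hy
        _ ≤ Δ := hΔ
  · rintro r ⟨W, ⟨hW0, hW1⟩, hWd, rfl⟩
    -- the symmetrized kernel
    set Wb : A ⊕ B → A ⊕ B → ℝ := fun x y => N⁻¹ *
      ∑ g : symGrp A B, W (ePerm (A := A) (B := B) g x) (ePerm (A := A) (B := B) g y)
      with hWbdef
    have hWb : ∀ x y, Wb x y = N⁻¹ *
        ∑ g : symGrp A B, W (ePerm (A := A) (B := B) g x) (ePerm (A := A) (B := B) g y) := by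
      intro x y; simp only [hWbdef]
    have hWb0 : ∀ x y, 0 ≤ Wb x y := by
      intro x y
      rw [hWb]
      exact mul_nonneg hNi0 (Finset.sum_nonneg fun g _ => hW0 _ _)
    have hWbrow : ∀ x, ∑ y, Wb x y = 1 := by
      intro x
      rw [Finset.sum_congr rfl (fun y _ => hWb x y), ← Finset.mul_sum, Finset.sum_comm]
      rw [Finset.sum_congr rfl
        (fun g _ => Equiv.sum_comp (ePerm (A := A) (B := B) g) (W (ePerm (A := A) (B := B) g x)))]
      rw [Finset.sum_congr rfl (fun g _ => hW1 _), hcard1]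
      field_simp
    -- distortion is preserved
    have dist_eq : ∑ x, ∑ y, P x * Wb x y * dAhl (A := A) (B := B) a b x y
        = ∑ x, ∑ y, Qmix (A := A) (B := B) ξ x * W x y * dAhl (A := A) (B := B) a b x y := by
      calc ∑ x, ∑ y, P x * Wb x y * dAhl (A := A) (B := B) a b x y
          = ∑ x, ∑ y, ∑ g : symGrp A B, N⁻¹ * (P x
              * W (ePerm (A := A) (B := B) g x) (ePerm (A := A) (B := B) g y)
              * dAhl (A := A) (B := B) a b x y) := by
            refine Finset.sum_congr rfl fun x _ => Finset.sum_congr rfl fun y _ => ?_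
            rw [hWb]
            exact sum_pull N⁻¹ (P x) (dAhl (A := A) (B := B) a b x y) _
        _ = ∑ g : symGrp A B, ∑ x, ∑ y, N⁻¹ * (P x
              * W (ePerm (A := A) (B := B) g x) (ePerm (A := A) (B := B) g y)
              * dAhl (A := A) (B := B) a b x y) := sum3_swap _
        _ = ∑ g : symGrp A B, ∑ x, ∑ y, N⁻¹ * (P ((ePerm (A := A) (B := B) g).symm x)
              * W x y * dAhl (A := A) (B := B) a b x y) := by
            refine Finset.sum_congr rfl fun g _ => ?_
            rw [sum2_perm ((ePerm (A := A) (B := B) g).symm) (fun x y => N⁻¹ * (P x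
              * W (ePerm (A := A) (B := B) g x) (ePerm (A := A) (B := B) g y)
              * dAhl (A := A) (B := B) a b x y))]
            simp only [Equiv.apply_symm_apply, dAhl_ePerm_symm]
        _ = ∑ x, ∑ y, ∑ g : symGrp A B, N⁻¹ * (P ((ePerm (A := A) (B := B) g).symm x)
              * W x y * dAhl (A := A) (B := B) a b x y) := (sum3_swap _).symm
        _ = ∑ x, ∑ y, Qmix (A := A) (B := B) ξ x * W x y
              * dAhl (A := A) (B := B) a b x y := by
            refine Finset.sum_congr rfl fun x _ => Finset.sum_congr rfl fun y _ => ?_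
            rw [Finset.sum_congr rfl (fun (g : symGrp A B) _ =>
              show N⁻¹ * (P ((ePerm (A := A) (B := B) g).symm x) * W x y
                  * dAhl (A := A) (B := B) a b x y)
                = N⁻¹ * (P ((ePerm (A := A) (B := B) g).symm x)
                  * (W x y * dAhl (A := A) (B := B) a b x y)) from by ring)]
            rw [sum_pull2, sumPeSymm x, inv_mul_cancel_left₀ hN.ne']
            ring
    have hdistP : ∑ x, ∑ y, P x * Wb x y * dAhl (A := A) (B := B) a b x y ≤ Δ := by
      rw [dist_eq]; exact hWd
    -- output distributions
    set s : A ⊕ B → ℝ := fun y => ∑ x, Qmix (A := A) (B := B) ξ x * W x y with hsdef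
    have hs : ∀ y, s y = ∑ x, Qmix (A := A) (B := B) ξ x * W x y := by
      intro y; simp only [hsdef]
    set r0 : A ⊕ B → ℝ := fun y => N⁻¹ * ∑ g : symGrp A B, s (ePerm (A := A) (B := B) g y)
      with hr0def
    have hr0 : ∀ y, r0 y = N⁻¹ * ∑ g : symGrp A B, s (ePerm (A := A) (B := B) g y) := by
      intro y; simp only [hr0def]
    set outP : A ⊕ B → ℝ := fun y => ∑ x, P x * Wb x y with houtdef
    have houtP : ∀ y, outP y = ∑ x, P x * Wb x y := by intro y; simp only [houtdef]
    have hs0 : ∀ y, 0 ≤ s y := by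
      intro y; rw [hs]
      exact Finset.sum_nonneg fun x _ => mul_nonneg (hQ0 x) (hW0 x y)
    have hssum : ∑ y, s y = 1 := by
      calc ∑ y, s y = ∑ y, ∑ x, Qmix (A := A) (B := B) ξ x * W x y :=
            Finset.sum_congr rfl (fun y _ => hs y)
        _ = ∑ x, ∑ y, Qmix (A := A) (B := B) ξ x * W x y := Finset.sum_comm
        _ = ∑ x, Qmix (A := A) (B := B) ξ x * ∑ y, W x y :=
            Finset.sum_congr rfl fun x _ => (Finset.mul_sum _ _ _).symm
        _ = 1 := by simp only [hW1, mul_one]; exact hQsum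
    have hr00 : ∀ y, 0 ≤ r0 y := by
      intro y; rw [hr0]
      exact mul_nonneg hNi0 (Finset.sum_nonneg fun g _ => hs0 _)
    have hr0sum : ∑ y, r0 y = 1 := by
      calc ∑ y, r0 y
          = N⁻¹ * ∑ y, ∑ g : symGrp A B, s (ePerm (A := A) (B := B) g y) := by
            rw [Finset.sum_congr rfl (fun y _ => hr0 y), ← Finset.mul_sum]
        _ = N⁻¹ * ∑ g : symGrp A B, ∑ y, s (ePerm (A := A) (B := B) g y) := by
            rw [Finset.sum_comm]
        _ = N⁻¹ * ∑ _g : symGrp A B, (1:ℝ) := by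
            rw [Finset.sum_congr rfl (fun g _ => by
              rw [Equiv.sum_comp (ePerm (A := A) (B := B) g) s, hssum])]
        _ = 1 := by rw [hcard1]; field_simp
    have hout0 : ∀ y, 0 ≤ outP y := by
      intro y; rw [houtP]
      exact Finset.sum_nonneg fun x _ => mul_nonneg (hP0 x) (hWb0 x y)
    have houtsum : ∑ y, outP y = 1 := by
      calc ∑ y, outP y = ∑ y, ∑ x, P x * Wb x y :=
            Finset.sum_congr rfl (fun y _ => houtP y)
        _ = ∑ x, ∑ y, P x * Wb x y := Finset.sum_comm
        _ = ∑ x, P x * ∑ y, Wb x y :=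
            Finset.sum_congr rfl fun x _ => (Finset.mul_sum _ _ _).symm
        _ = 1 := by simp only [hWbrow, mul_one]; exact hP1
    have hszero : ∀ y, s y = 0 → ∀ x, Qmix (A := A) (B := B) ξ x * W x y = 0 := by
      intro y hy x
      rw [hs] at hy
      exact (Finset.sum_eq_zero_iff_of_nonneg
        (fun x' _ => mul_nonneg (hQ0 x') (hW0 x' y))).1 hy x (Finset.mem_univ x)
    have hWzero : ∀ y (g : symGrp A B) x, s (ePerm (A := A) (B := B) g y) = 0 →
        P x * W (ePerm (A := A) (B := B) g x) (ePerm (A := A) (B := B) g y) = 0 := by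
      intro y g x hsy
      by_cases hQx : Qmix (A := A) (B := B) ξ x = 0
      · rw [hQP x hQx, zero_mul]
      · have h2 := hszero _ hsy (ePerm (A := A) (B := B) g x)
        rw [Qmix_ePerm] at h2
        rcases mul_eq_zero.1 h2 with h | h
        · exact absurd h hQx
        · rw [h, mul_zero]
    have hr0out : ∀ y, r0 y = 0 → outP y = 0 := by
      intro y hy
      rw [hr0] at hy
      have hsg : ∀ g : symGrp A B, s (ePerm (A := A) (B := B) g y) = 0 := by
        have hsum0 : ∑ g : symGrp A B, s (ePerm (A := A) (B := B) g y) = 0 := by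
          rcases mul_eq_zero.1 hy with h | h
          · exact absurd h hNi
          · exact h
        intro g
        exact (Finset.sum_eq_zero_iff_of_nonneg (fun g _ => hs0 _)).1 hsum0 g (Finset.mem_univ g)
      rw [houtP]
      refine Finset.sum_eq_zero fun x _ => ?_
      have hterm : P x * ∑ g : symGrp A B,
          W (ePerm (A := A) (B := B) g x) (ePerm (A := A) (B := B) g y) = 0 := by
        rw [Finset.mul_sum]
        exact Finset.sum_eq_zero fun g _ => hWzero y g x (hsg g)
      rw [hWb]
      calc P x * (N⁻¹ * ∑ g : symGrp A B,
              W (ePerm (A := A) (B := B) g x) (ePerm (A := A) (B := B) g y))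
          = N⁻¹ * (P x * ∑ g : symGrp A B,
              W (ePerm (A := A) (B := B) g x) (ePerm (A := A) (B := B) g y)) := by ring
        _ = 0 := by rw [hterm, mul_zero]
    have gibbs : 0 ≤ ∑ y, outP y * Real.log (outP y / r0 y) := by
      have key := log_sum_ineq outP r0 hout0 hr00 hr0out
      rw [houtsum, hr0sum] at key
      simpa using key
    have hMIP : mutualInfo P Wb = ∑ x, ∑ y, P x * Wb x y * Real.log (Wb x y / outP y) := by
      rw [mutualInfo]
    have hMIQ : mutualInfo (Qmix (A := A) (B := B) ξ) W
        = ∑ x, ∑ y, Qmix (A := A) (B := B) ξ x * (W x y * Real.log (W x y / s y)) := by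
      rw [mutualInfo]
      refine Finset.sum_congr rfl fun x _ => Finset.sum_congr rfl fun y _ => ?_
      rw [hs]
      ring
    have split : ∑ x, ∑ y, P x * Wb x y * Real.log (Wb x y / r0 y)
        = (∑ x, ∑ y, P x * Wb x y * Real.log (Wb x y / outP y))
          + ∑ y, outP y * Real.log (outP y / r0 y) := by
      have hstep : ∑ y, outP y * Real.log (outP y / r0 y)
          = ∑ x, ∑ y, P x * Wb x y * Real.log (outP y / r0 y) := by
        calc ∑ y, outP y * Real.log (outP y / r0 y)
            = ∑ y, ∑ x, P x * Wb x y * Real.log (outP y / r0 y) := by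
              refine Finset.sum_congr rfl fun y _ => ?_
              rw [houtP, Finset.sum_mul]
          _ = ∑ x, ∑ y, P x * Wb x y * Real.log (outP y / r0 y) := Finset.sum_comm
      rw [hstep, ← Finset.sum_add_distrib]
      refine Finset.sum_congr rfl fun x _ => ?_
      rw [← Finset.sum_add_distrib]
      refine Finset.sum_congr rfl fun y _ => ?_
      by_cases h : P x * Wb x y = 0
      · rw [h, zero_mul, zero_mul, zero_mul]; norm_num
      · have hprod : 0 < P x * Wb x y :=
          lt_of_le_of_ne (mul_nonneg (hP0 x) (hWb0 x y)) (Ne.symm h)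
        have houty : 0 < outP y := by
          have hle : P x * Wb x y ≤ outP y := by
            rw [houtP]
            exact Finset.single_le_sum
              (fun x' _ => mul_nonneg (hP0 x') (hWb0 x' y)) (Finset.mem_univ x)
          linarith
        have hr0y : 0 < r0 y := by
          rcases (hr00 y).eq_or_lt with h' | h'
          · exact absurd (hr0out y h'.symm) houty.ne'
          · exact h'
        have hWby : 0 < Wb x y := by
          rcases (hWb0 x y).eq_or_lt with h' | h'
          · have h'' : Wb x y = 0 := h'.symm
            exact absurd (by rw [h'', mul_zero]) h
          · exact h'
        rw [Real.log_div hWby.ne' houty.ne', Real.log_div houty.ne' hr0y.ne',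
          Real.log_div hWby.ne' hr0y.ne']
        ring
    have claim1 : mutualInfo P Wb ≤ ∑ x, ∑ y, P x * Wb x y * Real.log (Wb x y / r0 y) := by
      rw [hMIP, split]
      linarith
    have term2 : ∀ x y, P x * Wb x y * Real.log (Wb x y / r0 y)
        ≤ ∑ g : symGrp A B, N⁻¹ * (P x
            * (W (ePerm (A := A) (B := B) g x) (ePerm (A := A) (B := B) g y)
              * Real.log (W (ePerm (A := A) (B := B) g x) (ePerm (A := A) (B := B) g y)
                / s (ePerm (A := A) (B := B) g y)))) := by
      intro x y
      by_cases hPx : P x = 0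
      · simp [hPx]
      · have hfg : ∀ g : symGrp A B, N⁻¹ * (P x * s (ePerm (A := A) (B := B) g y)) = 0 →
            N⁻¹ * (P x * W (ePerm (A := A) (B := B) g x) (ePerm (A := A) (B := B) g y)) = 0 := by
          intro g hg
          have hsy : s (ePerm (A := A) (B := B) g y) = 0 := by
            rcases mul_eq_zero.1 hg with h | h
            · exact absurd h hNi
            rcases mul_eq_zero.1 h with h' | h'
            · exact absurd h' hPx
            · exact h'
          have h0 := hWzero y g x hsy
          rw [show P x * W (ePerm (A := A) (B := B) g x) (ePerm (A := A) (B := B) g y) = 0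
            from h0, mul_zero]
        have key := log_sum_ineq (ι := symGrp A B)
          (fun g => N⁻¹ * (P x * W (ePerm (A := A) (B := B) g x) (ePerm (A := A) (B := B) g y)))
          (fun g => N⁻¹ * (P x * s (ePerm (A := A) (B := B) g y)))
          (fun g => mul_nonneg hNi0 (mul_nonneg (hP0 x) (hW0 _ _)))
          (fun g => mul_nonneg hNi0 (mul_nonneg (hP0 x) (hs0 _)))
          hfg
        have hfsum : ∑ g : symGrp A B,
            N⁻¹ * (P x * W (ePerm (A := A) (B := B) g x) (ePerm (A := A) (B := B) g y))
            = P x * Wb x y := by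
          rw [← Finset.mul_sum, ← Finset.mul_sum, hWb]; ring
        have hgsum : ∑ g : symGrp A B, N⁻¹ * (P x * s (ePerm (A := A) (B := B) g y))
            = P x * r0 y := by
          rw [← Finset.mul_sum, ← Finset.mul_sum, hr0]; ring
        rw [hfsum, hgsum, mul_div_mul_left _ _ hPx] at key
        refine key.trans (le_of_eq (Finset.sum_congr rfl fun g _ => ?_))
        rw [mul_div_mul_left _ _ hNi, mul_div_mul_left _ _ hPx]
        ring
    have info_le : ∑ x, ∑ y, P x * Wb x y * Real.log (Wb x y / r0 y)
        ≤ mutualInfo (Qmix (A := A) (B := B) ξ) W := by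
      calc ∑ x, ∑ y, P x * Wb x y * Real.log (Wb x y / r0 y)
          ≤ ∑ x, ∑ y, ∑ g : symGrp A B, N⁻¹ * (P x
              * (W (ePerm (A := A) (B := B) g x) (ePerm (A := A) (B := B) g y)
                * Real.log (W (ePerm (A := A) (B := B) g x) (ePerm (A := A) (B := B) g y)
                  / s (ePerm (A := A) (B := B) g y)))) :=
            Finset.sum_le_sum fun x _ => Finset.sum_le_sum fun y _ => term2 x y
        _ = ∑ g : symGrp A B, ∑ x, ∑ y, N⁻¹ * (P x
              * (W (ePerm (A := A) (B := B) g x) (ePerm (A := A) (B := B) g y)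
                * Real.log (W (ePerm (A := A) (B := B) g x) (ePerm (A := A) (B := B) g y)
                  / s (ePerm (A := A) (B := B) g y)))) := sum3_swap _
        _ = ∑ g : symGrp A B, ∑ x, ∑ y, N⁻¹ * (P ((ePerm (A := A) (B := B) g).symm x)
              * (W x y * Real.log (W x y / s y))) := by
            refine Finset.sum_congr rfl fun g _ => ?_
            rw [sum2_perm ((ePerm (A := A) (B := B) g).symm) (fun x y => N⁻¹ * (P x
              * (W (ePerm (A := A) (B := B) g x) (ePerm (A := A) (B := B) g y)
                * Real.log (W (ePerm (A := A) (B := B) g x) (ePerm (A := A) (B := B) g y)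
                  / s (ePerm (A := A) (B := B) g y)))))]
            simp only [Equiv.apply_symm_apply]
        _ = ∑ x, ∑ y, ∑ g : symGrp A B, N⁻¹ * (P ((ePerm (A := A) (B := B) g).symm x)
              * (W x y * Real.log (W x y / s y))) := (sum3_swap _).symm
        _ = ∑ x, ∑ y, Qmix (A := A) (B := B) ξ x * (W x y * Real.log (W x y / s y)) := by
            refine Finset.sum_congr rfl fun x _ => Finset.sum_congr rfl fun y _ => ?_
            rw [sum_pull2, sumPeSymm x, inv_mul_cancel_left₀ hN.ne']
        _ = mutualInfo (Qmix (A := A) (B := B) ξ) W := hMIQ.symm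
    calc sInf { r | ∃ W, IsKernel W ∧
          (∑ x, ∑ y, P x * W x y * dAhl (A := A) (B := B) a b x y) ≤ Δ ∧ r = mutualInfo P W }
        ≤ mutualInfo P Wb := csInf_le hbdd ⟨Wb, ⟨hWb0, hWbrow⟩, hdistP, rfl⟩
      _ ≤ mutualInfo (Qmix (A := A) (B := B) ξ) W := claim1.trans info_le
end
end
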